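/- arXiv:2605.00525 — 12 statements merged into one kernel-verified Lean document; each statement's English description precedes it below -/
import Mathlib

section
/- Let π : H² → D² be the map π(x₁,x₂,x₃) = (x₂/(x₁+1), x₃/(x₁+1)) into the Poincaré 2-disc D² = {(a,b) ∈ ℝ² : a²+b² < 1}. Let γ : I → H², γ(t) = (x(t),y(t),z(t)), be a smooth curve and write γ̄ = π∘γ. Then: (i) for every t ∈ I, γ̇(t) = 0 if and only if γ̄'(t) = 0; (ii) if γ̇(t₀) = 0, then det(γ(t₀), γ̈(t₀), γ⃛(t₀)) = (x(t₀)+1)²·det(γ̄''(t₀), γ̄'''(t₀)), where the left-hand determinant is of the 3×3 matrix with these rows and the right-hand determinant is of the 2×2 matrix with these rows. -/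
noncomputable section

/-- Pseudo scalar product of Lorentz–Minkowski 3-space. -/
def mink (x y : Fin 3 → ℝ) : ℝ := -(x 0 * y 0) + x 1 * y 1 + x 2 * y 2

/-- Determinant of the 3×3 matrix with the given rows. -/
def det3 (a b c : Fin 3 → ℝ) : ℝ :=
  a 0 * (b 1 * c 2 - b 2 * c 1) - a 1 * (b 0 * c 2 - b 2 * c 0) + a 2 * (b 0 * c 1 - b 1 * c 0)

/-- Determinant of the 2×2 matrix with the given rows. -/
def det2 (p q : ℝ × ℝ) : ℝ := p.1 * q.2 - p.2 * q.1

/-- The key scalar algebraic identity. -/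
theorem alg_key (F G H F2 G2 H2 F3 G3 H3 P2 P3 Q2 Q3 : ℝ)
    (hu : F + 1 ≠ 0)
    (hC0 : -(F*F) + G*G + H*H = -1)
    (hC2 : -(F*F2) + G*G2 + H*H2 = 0)
    (hC3 : -(F*F3) + G*G3 + H*H3 = 0)
    (hE1 : G2 = P2*(F+1) + (G/(F+1))*F2)
    (hE2 : G3 = P3*(F+1) + (G/(F+1))*F3)
    (hE3 : H2 = Q2*(F+1) + (H/(F+1))*F2)
    (hE4 : H3 = Q3*(F+1) + (H/(F+1))*F3) :
    F*(G2*H3 - H2*G3) - G*(F2*H3 - H2*F3) + H*(F2*G3 - G2*F3)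
      = (F+1)^2 * (P2*Q3 - Q2*P3) := by
  have p2 : P2*(F+1)^2 = G2*(F+1) - G*F2 := by
    field_simp at hE1; linarith
  have p3 : P3*(F+1)^2 = G3*(F+1) - G*F3 := by
    field_simp at hE2; linarith
  have q2 : Q2*(F+1)^2 = H2*(F+1) - H*F2 := by
    field_simp at hE3; linarith
  have q3 : Q3*(F+1)^2 = H3*(F+1) - H*F3 := by
    field_simp at hE4; linarith
  have key : (F*(G2*H3 - H2*G3) - G*(F2*H3 - H2*F3) + H*(F2*G3 - G2*F3)) * (F+1)^2
      = (G2*(F+1) - G*F2)*(H3*(F+1) - H*F3) - (H2*(F+1) - H*F2)*(G3*(F+1) - G*F3) := by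
    linear_combination (-(F+1)*(G2*H3 - H2*G3))*hC0 + (-(F+1)*(G*H2 - H*G2))*hC3
      + (-(F+1)*(H*G3 - G*H3))*hC2
  have h4 : (F+1)^4 ≠ 0 := pow_ne_zero _ hu
  apply mul_left_cancel₀ h4
  calc (F+1)^4 * (F*(G2*H3 - H2*G3) - G*(F2*H3 - H2*F3) + H*(F2*G3 - G2*F3))
      = (F+1)^2 * ((F*(G2*H3 - H2*G3) - G*(F2*H3 - H2*F3) + H*(F2*G3 - G2*F3)) * (F+1)^2) := by
        ring
    _ = (F+1)^2 * ((G2*(F+1) - G*F2)*(H3*(F+1) - H*F3)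
          - (H2*(F+1) - H*F2)*(G3*(F+1) - G*F3)) := by rw [key]
    _ = (F+1)^2 * ((P2*(F+1)^2)*(Q3*(F+1)^2) - (Q2*(F+1)^2)*(P3*(F+1)^2)) := by
        rw [p2, p3, q2, q3]
    _ = (F+1)^4 * ((F+1)^2 * (P2*Q3 - Q2*P3)) := by ring

open Filter ContDiff in
/-- Criteria for singular points via the projection to the Poincaré 2-disc:
for a smooth curve `γ` in hyperbolic 2-space, with `γb = π ∘ γ` where
`π(x₁,x₂,x₃) = (x₂/(x₁+1), x₃/(x₁+1))`, one has (i) `γ̇(t) = 0 ↔ γb'(t) = 0` on `I`, and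
(ii) if `γ̇(t₀) = 0` then `det(γ, γ̈, γ⃛)(t₀) = (x(t₀)+1)² · det(γb'', γb''')(t₀)`. -/
theorem stmt_0 (I : Set ℝ) (hI : IsOpen I) (hI' : I.OrdConnected)
    (γ : ℝ → Fin 3 → ℝ) (hγ : ContDiff ℝ (⊤ : ℕ∞) γ)
    (hH : ∀ t ∈ I, mink (γ t) (γ t) = -1 ∧ 0 < γ t 0)
    (γb : ℝ → ℝ × ℝ)
    (hγb : ∀ t, γb t = (γ t 1 / (γ t 0 + 1), γ t 2 / (γ t 0 + 1))) :
    (∀ t ∈ I, deriv γ t = 0 ↔ deriv γb t = 0) ∧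
    (∀ t₀ ∈ I, deriv γ t₀ = 0 →
      det3 (γ t₀) (deriv (deriv γ) t₀) (deriv (deriv (deriv γ)) t₀)
        = (γ t₀ 0 + 1) ^ 2 *
          det2 (deriv (deriv γb) t₀) (deriv (deriv (deriv γb)) t₀)) := by
  have hone : (1 : WithTop ℕ∞) ≤ ∞ := by exact_mod_cast le_top
  have hcomp : ∀ i, ContDiff ℝ ∞ (fun t : ℝ => γ t i) := contDiff_pi.mp (hγ.of_le (by simp))
  set X : ℝ → ℝ := fun t => γ t 0 with hXdef
  set Y : ℝ → ℝ := fun t => γ t 1 with hYdef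
  set Z : ℝ → ℝ := fun t => γ t 2 with hZdef
  have hX : ContDiff ℝ ∞ X := hcomp 0
  have hY : ContDiff ℝ ∞ Y := hcomp 1
  have hZ : ContDiff ℝ ∞ Z := hcomp 2
  have hder : ∀ (F : ℝ → ℝ), ContDiff ℝ ∞ F → ContDiff ℝ ∞ (deriv F) :=
    fun F hF => (contDiff_infty_iff_deriv.mp hF).2
  -- differentiability of components and their derivatives, everywhere
  have dX : ∀ t, DifferentiableAt ℝ X t := fun t => hX.differentiable (by simp) t
  have dY : ∀ t, DifferentiableAt ℝ Y t := fun t => hY.differentiable (by simp) t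
  have dZ : ∀ t, DifferentiableAt ℝ Z t := fun t => hZ.differentiable (by simp) t
  have dX1 : ∀ t, DifferentiableAt ℝ (deriv X) t :=
    fun t => (hder X hX).differentiable (by simp) t
  have dY1 : ∀ t, DifferentiableAt ℝ (deriv Y) t :=
    fun t => (hder Y hY).differentiable (by simp) t
  have dZ1 : ∀ t, DifferentiableAt ℝ (deriv Z) t :=
    fun t => (hder Z hZ).differentiable (by simp) t
  have dX2 : ∀ t, DifferentiableAt ℝ (deriv (deriv X)) t :=
    fun t => (hder _ (hder X hX)).differentiable (by simp) t
  have dY2 : ∀ t, DifferentiableAt ℝ (deriv (deriv Y)) t :=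
    fun t => (hder _ (hder Y hY)).differentiable (by simp) t
  have dZ2 : ∀ t, DifferentiableAt ℝ (deriv (deriv Z)) t :=
    fun t => (hder _ (hder Z hZ)).differentiable (by simp) t
  -- derivatives of γ componentwise
  have hγd1 : ∀ t, deriv γ t = fun i => deriv (fun s => γ s i) t := by
    intro t
    exact (hasDerivAt_pi.mpr fun i =>
      ((hcomp i).differentiable (by simp) t).hasDerivAt).deriv
  have hγfun1 : deriv γ = fun t i => deriv (fun s => γ s i) t := funext hγd1
  have hγd2 : ∀ t, deriv (deriv γ) t = fun i => deriv (deriv (fun s => γ s i)) t := by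
    intro t
    rw [hγfun1]
    exact (hasDerivAt_pi.mpr fun i =>
      ((hder _ (hcomp i)).differentiable (by simp) t).hasDerivAt).deriv
  have hγfun2 : deriv (deriv γ) = fun t i => deriv (deriv (fun s => γ s i)) t :=
    funext hγd2
  have hγd3 : ∀ t, deriv (deriv (deriv γ)) t
      = fun i => deriv (deriv (deriv (fun s => γ s i))) t := by
    intro t
    rw [hγfun2]
    exact (hasDerivAt_pi.mpr fun i =>
      ((hder _ (hder _ (hcomp i))).differentiable (by simp) t).hasDerivAt).deriv
  -- basic facts on I
  have hne : ∀ t ∈ I, X t + 1 ≠ 0 := by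
    intro t ht
    have := (hH t ht).2
    positivity
  have hm : ∀ t ∈ I, -(X t * X t) + Y t * Y t + Z t * Z t = -1 := by
    intro t ht
    simpa [mink] using (hH t ht).1
  -- φ, ψ
  set φ : ℝ → ℝ := fun t => Y t / (X t + 1) with hφdef
  set ψ : ℝ → ℝ := fun t => Z t / (X t + 1) with hψdef
  have hγbfun : γb = fun t => (φ t, ψ t) := funext fun t => hγb t
  subst hγbfun
  -- derivative of φ, ψ on I by the quotient rule
  have hXadd : ∀ t, HasDerivAt (fun s => X s + 1) (deriv X t) t :=
    fun t => ((dX t).hasDerivAt).add_const 1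
  have hφd : ∀ t ∈ I, HasDerivAt φ
      ((deriv Y t * (X t + 1) - Y t * deriv X t) / (X t + 1) ^ 2) t := by
    intro t ht
    exact (dY t).hasDerivAt.div (hXadd t) (hne t ht)
  have hψd : ∀ t ∈ I, HasDerivAt ψ
      ((deriv Z t * (X t + 1) - Z t * deriv X t) / (X t + 1) ^ 2) t := by
    intro t ht
    exact (dZ t).hasDerivAt.div (hXadd t) (hne t ht)
  -- smoothness of φ, ψ on I
  have hφI : ContDiffOn ℝ ∞ φ I := fun t ht =>
    (hY.contDiffAt.div ((hX.add contDiff_const).contDiffAt) (hne t ht)).contDiffWithinAt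
  have hψI : ContDiffOn ℝ ∞ ψ I := fun t ht =>
    (hZ.contDiffAt.div ((hX.add contDiff_const).contDiffAt) (hne t ht)).contDiffWithinAt
  have hφ1I : ContDiffOn ℝ ∞ (deriv φ) I := hφI.deriv_of_isOpen hI (le_refl _)
  have hψ1I : ContDiffOn ℝ ∞ (deriv ψ) I := hψI.deriv_of_isOpen hI (le_refl _)
  have hφ2I : ContDiffOn ℝ ∞ (deriv (deriv φ)) I := hφ1I.deriv_of_isOpen hI (le_refl _)
  have hψ2I : ContDiffOn ℝ ∞ (deriv (deriv ψ)) I := hψ1I.deriv_of_isOpen hI (le_refl _)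
  have dφ : ∀ t ∈ I, DifferentiableAt ℝ φ t := fun t ht =>
    (hφI.differentiableOn (by simp)).differentiableAt (hI.mem_nhds ht)
  have dψ : ∀ t ∈ I, DifferentiableAt ℝ ψ t := fun t ht =>
    (hψI.differentiableOn (by simp)).differentiableAt (hI.mem_nhds ht)
  have dφ1 : ∀ t ∈ I, DifferentiableAt ℝ (deriv φ) t := fun t ht =>
    (hφ1I.differentiableOn (by simp)).differentiableAt (hI.mem_nhds ht)
  have dψ1 : ∀ t ∈ I, DifferentiableAt ℝ (deriv ψ) t := fun t ht =>
    (hψ1I.differentiableOn (by simp)).differentiableAt (hI.mem_nhds ht)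
  have dφ2 : ∀ t ∈ I, DifferentiableAt ℝ (deriv (deriv φ)) t := fun t ht =>
    (hφ2I.differentiableOn (by simp)).differentiableAt (hI.mem_nhds ht)
  have dψ2 : ∀ t ∈ I, DifferentiableAt ℝ (deriv (deriv ψ)) t := fun t ht =>
    (hψ2I.differentiableOn (by simp)).differentiableAt (hI.mem_nhds ht)
  -- first derivative of γb on I
  have hγb1 : ∀ t ∈ I, deriv (fun s => (φ s, ψ s)) t = (deriv φ t, deriv ψ t) := by
    intro t ht
    exact ((dφ t ht).hasDerivAt.prodMk (dψ t ht).hasDerivAt).deriv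
  -- first-order Minkowski relation on I
  have hK1 : ∀ t ∈ I, -(X t * deriv X t) + Y t * deriv Y t + Z t * deriv Z t = 0 := by
    intro t ht
    have hev : (fun s => -(X s * X s) + Y s * Y s + Z s * Z s) =ᶠ[nhds t]
        fun _ => (-1 : ℝ) :=
      eventuallyEq_of_mem (hI.mem_nhds ht) fun s hs => hm s hs
    have h0 : deriv (fun s => -(X s * X s) + Y s * Y s + Z s * Z s) t = 0 := by
      rw [hev.deriv_eq]; exact deriv_const t _
    have h1 : HasDerivAt (fun s => -(X s * X s) + Y s * Y s + Z s * Z s)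
        (-(deriv X t * X t + X t * deriv X t) + (deriv Y t * Y t + Y t * deriv Y t)
          + (deriv Z t * Z t + Z t * deriv Z t)) t :=
      (((dX t).hasDerivAt.mul (dX t).hasDerivAt).neg.add
        ((dY t).hasDerivAt.mul (dY t).hasDerivAt)).add
        ((dZ t).hasDerivAt.mul (dZ t).hasDerivAt)
    have h2 := h1.deriv.symm.trans h0
    linear_combination h2 / 2
  -- vanishing of component derivatives from deriv γ = 0
  have hcompzero : ∀ t, deriv γ t = 0 →
      deriv X t = 0 ∧ deriv Y t = 0 ∧ deriv Z t = 0 := by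
    intro t h0
    refine ⟨?_, ?_, ?_⟩
    · rw [hXdef]
      have := congrFun ((hγd1 t).symm.trans h0) 0
      simpa using this
    · rw [hYdef]
      have := congrFun ((hγd1 t).symm.trans h0) 1
      simpa using this
    · rw [hZdef]
      have := congrFun ((hγd1 t).symm.trans h0) 2
      simpa using this
  -- Part (i)
  have partI : ∀ t ∈ I, deriv γ t = 0 ↔ deriv (fun s => (φ s, ψ s)) t = 0 := by
    intro t ht
    constructor
    · intro h0
      obtain ⟨hX1, hY1, hZ1⟩ := hcompzero t h0
      have hφ1 : deriv φ t = 0 := by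
        rw [(hφd t ht).deriv, hX1, hY1]; ring
      have hψ1 : deriv ψ t = 0 := by
        rw [(hψd t ht).deriv, hX1, hZ1]; ring
      rw [hγb1 t ht, hφ1, hψ1]
      exact Prod.mk_eq_zero.mpr ⟨rfl, rfl⟩
    · intro h0
      have hp : (deriv φ t, deriv ψ t) = (0 : ℝ × ℝ) := (hγb1 t ht).symm.trans h0
      obtain ⟨hφ1, hψ1⟩ := Prod.mk_eq_zero.mp hp
      have hu2 : ((X t + 1) ^ 2 : ℝ) ≠ 0 := pow_ne_zero _ (hne t ht)
      have e1 : deriv Y t * (X t + 1) - Y t * deriv X t = 0 := by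
        have h2 := ((hφd t ht).deriv.symm.trans hφ1)
        exact (div_eq_zero_iff.mp h2).resolve_right hu2
      have e2 : deriv Z t * (X t + 1) - Z t * deriv X t = 0 := by
        have h2 := ((hψd t ht).deriv.symm.trans hψ1)
        exact (div_eq_zero_iff.mp h2).resolve_right hu2
      have hK := hK1 t ht
      have hm0 := hm t ht
      have hX1 : deriv X t = 0 := by
        have hz : deriv X t * (X t + 1) = 0 := by
          linear_combination (-(X t + 1)) * hK + (Y t) * e1 + (Z t) * e2
            + (deriv X t) * hm0
        exact (mul_eq_zero.mp hz).resolve_right (hne t ht)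
      have hY1 : deriv Y t = 0 := by
        have hz : deriv Y t * (X t + 1) = 0 := by
          linear_combination e1 + (Y t) * hX1
        exact (mul_eq_zero.mp hz).resolve_right (hne t ht)
      have hZ1 : deriv Z t = 0 := by
        have hz : deriv Z t * (X t + 1) = 0 := by
          linear_combination e2 + (Z t) * hX1
        exact (mul_eq_zero.mp hz).resolve_right (hne t ht)
      rw [hγd1 t]
      funext i
      fin_cases i
      · simpa [← hXdef] using hX1
      · simpa [← hYdef] using hY1
      · simpa [← hZdef] using hZ1
  refine ⟨partI, ?_⟩
  -- Part (ii)
  intro t₀ ht₀ h0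
  obtain ⟨hX1z, hY1z, hZ1z⟩ := hcompzero t₀ h0
  have hφ1z : deriv φ t₀ = 0 := by
    rw [(hφd t₀ ht₀).deriv, hX1z, hY1z]; ring
  have hψ1z : deriv ψ t₀ = 0 := by
    rw [(hψd t₀ ht₀).deriv, hX1z, hZ1z]; ring
  -- second and third derivatives of γb
  have hγb2 : ∀ t ∈ I, deriv (deriv (fun s => (φ s, ψ s))) t
      = (deriv (deriv φ) t, deriv (deriv ψ) t) := by
    intro t ht
    rw [(eventuallyEq_of_mem (hI.mem_nhds ht) fun s hs => hγb1 s hs).deriv_eq]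
    exact ((dφ1 t ht).hasDerivAt.prodMk (dψ1 t ht).hasDerivAt).deriv
  have hγb3 : deriv (deriv (deriv (fun s => (φ s, ψ s)))) t₀
      = (deriv (deriv (deriv φ)) t₀, deriv (deriv (deriv ψ)) t₀) := by
    rw [(eventuallyEq_of_mem (hI.mem_nhds ht₀) fun s hs => hγb2 s hs).deriv_eq]
    exact ((dφ2 t₀ ht₀).hasDerivAt.prodMk (dψ2 t₀ ht₀).hasDerivAt).deriv
  -- product-rule chain for Y = φ * (X + 1)
  have hYev : ∀ t ∈ I, Y t = φ t * (X t + 1) := fun t ht =>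
    (div_mul_cancel₀ (Y t) (hne t ht)).symm
  have hZev : ∀ t ∈ I, Z t = ψ t * (X t + 1) := fun t ht =>
    (div_mul_cancel₀ (Z t) (hne t ht)).symm
  have hL1Y : ∀ t ∈ I, deriv Y t = deriv φ t * (X t + 1) + φ t * deriv X t := by
    intro t ht
    rw [(eventuallyEq_of_mem (hI.mem_nhds ht) fun s hs => hYev s hs).deriv_eq]
    exact ((dφ t ht).hasDerivAt.mul (hXadd t)).deriv
  have hL1Z : ∀ t ∈ I, deriv Z t = deriv ψ t * (X t + 1) + ψ t * deriv X t := by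
    intro t ht
    rw [(eventuallyEq_of_mem (hI.mem_nhds ht) fun s hs => hZev s hs).deriv_eq]
    exact ((dψ t ht).hasDerivAt.mul (hXadd t)).deriv
  have hL2Y : ∀ t ∈ I, deriv (deriv Y) t
      = (deriv (deriv φ) t * (X t + 1) + deriv φ t * deriv X t)
        + (deriv φ t * deriv X t + φ t * deriv (deriv X) t) := by
    intro t ht
    rw [(eventuallyEq_of_mem (hI.mem_nhds ht) fun s hs => hL1Y s hs).deriv_eq]
    exact (((dφ1 t ht).hasDerivAt.mul (hXadd t)).add
      ((dφ t ht).hasDerivAt.mul (dX1 t).hasDerivAt)).deriv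
  have hL2Z : ∀ t ∈ I, deriv (deriv Z) t
      = (deriv (deriv ψ) t * (X t + 1) + deriv ψ t * deriv X t)
        + (deriv ψ t * deriv X t + ψ t * deriv (deriv X) t) := by
    intro t ht
    rw [(eventuallyEq_of_mem (hI.mem_nhds ht) fun s hs => hL1Z s hs).deriv_eq]
    exact (((dψ1 t ht).hasDerivAt.mul (hXadd t)).add
      ((dψ t ht).hasDerivAt.mul (dX1 t).hasDerivAt)).deriv
  have hL3Y : deriv (deriv (deriv Y)) t₀
      = ((deriv (deriv (deriv φ)) t₀ * (X t₀ + 1) + deriv (deriv φ) t₀ * deriv X t₀)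
          + (deriv (deriv φ) t₀ * deriv X t₀ + deriv φ t₀ * deriv (deriv X) t₀))
        + ((deriv (deriv φ) t₀ * deriv X t₀ + deriv φ t₀ * deriv (deriv X) t₀)
          + (deriv φ t₀ * deriv (deriv X) t₀ + φ t₀ * deriv (deriv (deriv X)) t₀)) := by
    rw [(eventuallyEq_of_mem (hI.mem_nhds ht₀) fun s hs => hL2Y s hs).deriv_eq]
    exact ((((dφ2 t₀ ht₀).hasDerivAt.mul (hXadd t₀)).add
        ((dφ1 t₀ ht₀).hasDerivAt.mul (dX1 t₀).hasDerivAt)).add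
      (((dφ1 t₀ ht₀).hasDerivAt.mul (dX1 t₀).hasDerivAt).add
        ((dφ t₀ ht₀).hasDerivAt.mul (dX2 t₀).hasDerivAt))).deriv
  have hL3Z : deriv (deriv (deriv Z)) t₀
      = ((deriv (deriv (deriv ψ)) t₀ * (X t₀ + 1) + deriv (deriv ψ) t₀ * deriv X t₀)
          + (deriv (deriv ψ) t₀ * deriv X t₀ + deriv ψ t₀ * deriv (deriv X) t₀))
        + ((deriv (deriv ψ) t₀ * deriv X t₀ + deriv ψ t₀ * deriv (deriv X) t₀)
          + (deriv ψ t₀ * deriv (deriv X) t₀ + ψ t₀ * deriv (deriv (deriv X)) t₀)) := by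
    rw [(eventuallyEq_of_mem (hI.mem_nhds ht₀) fun s hs => hL2Z s hs).deriv_eq]
    exact ((((dψ2 t₀ ht₀).hasDerivAt.mul (hXadd t₀)).add
        ((dψ1 t₀ ht₀).hasDerivAt.mul (dX1 t₀).hasDerivAt)).add
      (((dψ1 t₀ ht₀).hasDerivAt.mul (dX1 t₀).hasDerivAt).add
        ((dψ t₀ ht₀).hasDerivAt.mul (dX2 t₀).hasDerivAt))).deriv
  -- second-order Minkowski relation on I
  have hK2 : ∀ t ∈ I, -(deriv X t * deriv X t + X t * deriv (deriv X) t)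
      + (deriv Y t * deriv Y t + Y t * deriv (deriv Y) t)
      + (deriv Z t * deriv Z t + Z t * deriv (deriv Z) t) = 0 := by
    intro t ht
    have h0' : deriv (fun s => -(X s * deriv X s) + Y s * deriv Y s + Z s * deriv Z s) t
        = 0 := by
      rw [(eventuallyEq_of_mem (hI.mem_nhds ht) fun s hs => hK1 s hs).deriv_eq]
      exact deriv_const t _
    have h1 : HasDerivAt (fun s => -(X s * deriv X s) + Y s * deriv Y s + Z s * deriv Z s)
        (-(deriv X t * deriv X t + X t * deriv (deriv X) t)
          + (deriv Y t * deriv Y t + Y t * deriv (deriv Y) t)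
          + (deriv Z t * deriv Z t + Z t * deriv (deriv Z) t)) t :=
      (((dX t).hasDerivAt.mul (dX1 t).hasDerivAt).neg.add
        ((dY t).hasDerivAt.mul (dY1 t).hasDerivAt)).add
        ((dZ t).hasDerivAt.mul (dZ1 t).hasDerivAt)
    exact h1.deriv.symm.trans h0'
  -- third-order Minkowski relation at t₀
  have hK3 : -(X t₀ * deriv (deriv (deriv X)) t₀)
      + Y t₀ * deriv (deriv (deriv Y)) t₀ + Z t₀ * deriv (deriv (deriv Z)) t₀ = 0 := by
    have h0' : deriv (fun s => -(deriv X s * deriv X s + X s * deriv (deriv X) s)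
        + (deriv Y s * deriv Y s + Y s * deriv (deriv Y) s)
        + (deriv Z s * deriv Z s + Z s * deriv (deriv Z) s)) t₀ = 0 := by
      rw [(eventuallyEq_of_mem (hI.mem_nhds ht₀) fun s hs => hK2 s hs).deriv_eq]
      exact deriv_const t₀ _
    have h1 : HasDerivAt (fun s => -(deriv X s * deriv X s + X s * deriv (deriv X) s)
        + (deriv Y s * deriv Y s + Y s * deriv (deriv Y) s)
        + (deriv Z s * deriv Z s + Z s * deriv (deriv Z) s))
        (-((deriv (deriv X) t₀ * deriv X t₀ + deriv X t₀ * deriv (deriv X) t₀)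
            + (deriv X t₀ * deriv (deriv X) t₀ + X t₀ * deriv (deriv (deriv X)) t₀))
          + ((deriv (deriv Y) t₀ * deriv Y t₀ + deriv Y t₀ * deriv (deriv Y) t₀)
            + (deriv Y t₀ * deriv (deriv Y) t₀ + Y t₀ * deriv (deriv (deriv Y)) t₀))
          + ((deriv (deriv Z) t₀ * deriv Z t₀ + deriv Z t₀ * deriv (deriv Z) t₀)
            + (deriv Z t₀ * deriv (deriv Z) t₀ + Z t₀ * deriv (deriv (deriv Z)) t₀))) t₀ :=
      (((((dX1 t₀).hasDerivAt.mul (dX1 t₀).hasDerivAt).add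
          ((dX t₀).hasDerivAt.mul (dX2 t₀).hasDerivAt)).neg).add
        (((dY1 t₀).hasDerivAt.mul (dY1 t₀).hasDerivAt).add
          ((dY t₀).hasDerivAt.mul (dY2 t₀).hasDerivAt))).add
        (((dZ1 t₀).hasDerivAt.mul (dZ1 t₀).hasDerivAt).add
          ((dZ t₀).hasDerivAt.mul (dZ2 t₀).hasDerivAt))
    have h2 := h1.deriv.symm.trans h0'
    rw [hX1z, hY1z, hZ1z] at h2
    linarith
  -- assemble the scalar hypotheses
  have hφval : φ t₀ = Y t₀ / (X t₀ + 1) := by rw [hφdef]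
  have hψval : ψ t₀ = Z t₀ / (X t₀ + 1) := by rw [hψdef]
  have hC2 : -(X t₀ * deriv (deriv X) t₀) + Y t₀ * deriv (deriv Y) t₀
      + Z t₀ * deriv (deriv Z) t₀ = 0 := by
    have := hK2 t₀ ht₀
    rw [hX1z, hY1z, hZ1z] at this
    linarith
  have hE1 : deriv (deriv Y) t₀ = deriv (deriv φ) t₀ * (X t₀ + 1)
      + (Y t₀ / (X t₀ + 1)) * deriv (deriv X) t₀ := by
    have := hL2Y t₀ ht₀
    rw [hX1z, hφ1z, hφval] at this
    linarith
  have hE2 : deriv (deriv (deriv Y)) t₀ = deriv (deriv (deriv φ)) t₀ * (X t₀ + 1)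
      + (Y t₀ / (X t₀ + 1)) * deriv (deriv (deriv X)) t₀ := by
    have := hL3Y
    rw [hX1z, hφ1z, hφval] at this
    linarith
  have hE3 : deriv (deriv Z) t₀ = deriv (deriv ψ) t₀ * (X t₀ + 1)
      + (Z t₀ / (X t₀ + 1)) * deriv (deriv X) t₀ := by
    have := hL2Z t₀ ht₀
    rw [hX1z, hψ1z, hψval] at this
    linarith
  have hE4 : deriv (deriv (deriv Z)) t₀ = deriv (deriv (deriv ψ)) t₀ * (X t₀ + 1)
      + (Z t₀ / (X t₀ + 1)) * deriv (deriv (deriv X)) t₀ := by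
    have := hL3Z
    rw [hX1z, hψ1z, hψval] at this
    linarith
  have key := alg_key (X t₀) (Y t₀) (Z t₀)
    (deriv (deriv X) t₀) (deriv (deriv Y) t₀) (deriv (deriv Z) t₀)
    (deriv (deriv (deriv X)) t₀) (deriv (deriv (deriv Y)) t₀) (deriv (deriv (deriv Z)) t₀)
    (deriv (deriv φ) t₀) (deriv (deriv (deriv φ)) t₀)
    (deriv (deriv ψ) t₀) (deriv (deriv (deriv ψ)) t₀)
    (hne t₀ ht₀) (hm t₀ ht₀) hC2 hK3 hE1 hE2 hE3 hE4
  -- rewrite the goal in scalar form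
  rw [hγd2 t₀, hγd3 t₀, hγb2 t₀ ht₀, hγb3]
  simp only [det3, det2]
  rw [← hXdef, ← hYdef, ← hZdef, show γ t₀ 0 = X t₀ by rw [hXdef],
    show γ t₀ 1 = Y t₀ by rw [hYdef], show γ t₀ 2 = Z t₀ by rw [hZdef]]
  exact key
end
end

section
/- Let (γ,ν) : I → Δ₁ be a spacelike Legendre curve with curvature (m,n) and μ = γ∧ν. Define x_N^±(s,t) = γ(t) + sν(t) + (s²/2)(γ(t) ± μ(t)) and ν_N^±(s,t) = ∓μ(t) + sν(t) + (s²/2)(γ(t) ± μ(t)) on ℝ × I. Then for all (s,t): ⟨x_N^±, x_N^±⟩ = −1 with first coordinate positive, ⟨ν_N^±, ν_N^±⟩ = 1, ⟨x_N^±, ν_N^±⟩ = 0 and ⟨∂x_N^±/∂s, ν_N^±⟩ = 0 (so (x_N^±, ν_N^±) is a one-parameter family of spacelike Legendre curves), and with μ_N^± = x_N^± ∧ ν_N^± the following Frenet-type identities hold: ∂x_N^±/∂s = ±μ_N^±, ∂ν_N^±/∂s = ±μ_N^±, ∂x_N^±/∂t = ∓(m(t)+s n(t))·ν_N^± + (s²n(t)/2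 + s m(t))·μ_N^±, and ∂ν_N^±/∂t = ∓(m(t)+s n(t))·x_N^± + (s²n(t)/2 + s m(t) + n(t))·μ_N^±. In particular the curvature of this family is (m_N^±, n_N^±, L_N^±, M_N^±, N_N^±) = (±1, ±1, ∓(m+sn), s²n/2+sm, s²n/2+sm+n). -/
noncomputable section

/-- Pseudo vector product of Lorentz–Minkowski 3-space. -/
def lcross (x y : Fin 3 → ℝ) : Fin 3 → ℝ :=
  ![-(x 1 * y 2 - x 2 * y 1), -(x 0 * y 2 - x 2 * y 0), x 0 * y 1 - x 1 * y 0]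

lemma U1 (x y : Fin 3 → ℝ) : lcross x (lcross x y) = mink x x • y - mink x y • x := by
  funext i; fin_cases i <;>
    simp [lcross, mink, Pi.smul_apply, Pi.sub_apply, smul_eq_mul] <;> ring

lemma U1b (x y : Fin 3 → ℝ) : lcross y (lcross x y) = mink x y • y - mink y y • x := by
  funext i; fin_cases i <;>
    simp [lcross, mink, Pi.smul_apply, Pi.sub_apply, smul_eq_mul] <;> ring

lemma U1c (x y : Fin 3 → ℝ) : lcross (lcross x y) y = mink y y • x - mink x y • y := by
  funext i; fin_cases i <;>
    simp [lcross, mink, Pi.smul_apply, Pi.sub_apply, smul_eq_mul] <;> ring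

lemma U1d (x y : Fin 3 → ℝ) : lcross (lcross x y) x = mink x y • x - mink x x • y := by
  funext i; fin_cases i <;>
    simp [lcross, mink, Pi.smul_apply, Pi.sub_apply, smul_eq_mul] <;> ring

lemma U2 (x y : Fin 3 → ℝ) :
    mink (lcross x y) (lcross x y) = mink x y ^ 2 - mink x x * mink y y := by
  simp [lcross, mink]; ring

lemma U3 (x y : Fin 3 → ℝ) : mink x (lcross x y) = 0 := by
  simp [lcross, mink]; ring

lemma U4 (x y : Fin 3 → ℝ) : mink y (lcross x y) = 0 := by
  simp [lcross, mink]; ring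

lemma mink_combo (a b c a' b' c' : ℝ) (x y z : Fin 3 → ℝ) :
    mink (a • x + b • y + c • z) (a' • x + b' • y + c' • z)
      = a * a' * mink x x + (a * b' + a' * b) * mink x y + (a * c' + a' * c) * mink x z
        + b * b' * mink y y + (b * c' + b' * c) * mink y z + c * c' * mink z z := by
  simp [mink, Pi.add_apply, Pi.smul_apply, smul_eq_mul]; ring

lemma lcross_combo (a b c a' b' c' : ℝ) (x y z : Fin 3 → ℝ) :
    lcross (a • x + b • y + c • z) (a' • x + b' • y + c' • z)
      = (a * b' - a' * b) • lcross x y + (b * c' - b' * c) • lcross y z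
        + (c * a' - c' * a) • lcross z x := by
  funext i; fin_cases i <;>
    simp [lcross, Pi.add_apply, Pi.smul_apply, smul_eq_mul] <;> ring

lemma lcross_smul_left (a : ℝ) (x y : Fin 3 → ℝ) : lcross (a • x) y = a • lcross x y := by
  funext i; fin_cases i <;> simp [lcross, Pi.smul_apply, smul_eq_mul] <;> ring

lemma lcross_smul_right (a : ℝ) (x y : Fin 3 → ℝ) : lcross x (a • y) = a • lcross x y := by
  funext i; fin_cases i <;> simp [lcross, Pi.smul_apply, smul_eq_mul] <;> ring

lemma lcross_hasDerivAt {f g : ℝ → Fin 3 → ℝ} {f' g' : Fin 3 → ℝ} {t : ℝ}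
    (hf : HasDerivAt f f' t) (hg : HasDerivAt g g' t) :
    HasDerivAt (fun τ => lcross (f τ) (g τ)) (lcross f' (g t) + lcross (f t) g') t := by
  have hfi : ∀ i, HasDerivAt (fun τ => f τ i) (f' i) t := fun i => hasDerivAt_pi.mp hf i
  have hgi : ∀ i, HasDerivAt (fun τ => g τ i) (g' i) t := fun i => hasDerivAt_pi.mp hg i
  refine hasDerivAt_pi.mpr fun i => ?_
  fin_cases i
  · have h := ((((hfi 1).mul (hgi 2)).sub ((hfi 2).mul (hgi 1))).neg)
    convert h using 1
    · funext τ; simp [lcross] <;> ring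
    · simp [lcross, Pi.add_apply]; ring
  · have h := ((((hfi 0).mul (hgi 2)).sub ((hfi 2).mul (hgi 0))).neg)
    convert h using 1
    · funext τ; simp [lcross] <;> ring
    · simp [lcross, Pi.add_apply]; ring
  · have h := (((hfi 0).mul (hgi 1)).sub ((hfi 1).mul (hgi 0)))
    convert h using 1
    · funext τ; simp [lcross] <;> ring
    · simp [lcross, Pi.add_apply]; ring

set_option maxHeartbeats 2000000 in
/-- The family of normal horocycles `x_N^±` of a spacelike Legendre curve, together with
`ν_N^±`, is a one-parameter family of spacelike Legendre curves with curvature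
`(±1, ±1, ∓(m+sn), s²n/2+sm, s²n/2+sm+n)`.  The sign `±` is encoded by `ε ∈ {1, -1}`. -/
theorem stmt_1 (I : Set ℝ) (hI : I.OrdConnected)
    (γ ν : ℝ → Fin 3 → ℝ) (m n : ℝ → ℝ)
    (hγ : ContDiff ℝ (⊤ : ℕ∞) γ) (hν : ContDiff ℝ (⊤ : ℕ∞) ν)
    (hm : ContDiff ℝ (⊤ : ℕ∞) m) (hn : ContDiff ℝ (⊤ : ℕ∞) n)
    (hH : ∀ t ∈ I, mink (γ t) (γ t) = -1 ∧ 0 < γ t 0)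
    (hS : ∀ t ∈ I, mink (ν t) (ν t) = 1)
    (hO : ∀ t ∈ I, mink (γ t) (ν t) = 0)
    (hdγ : ∀ t ∈ I, deriv γ t = m t • lcross (γ t) (ν t))
    (hdν : ∀ t ∈ I, deriv ν t = n t • lcross (γ t) (ν t))
    (ε : ℝ) (hε : ε = 1 ∨ ε = -1)
    (xN νN : ℝ → ℝ → Fin 3 → ℝ)
    (hxN : ∀ s t, xN s t
      = γ t + s • ν t + (s ^ 2 / 2) • (γ t + ε • lcross (γ t) (ν t)))
    (hνN : ∀ s t, νN s t
      = (-ε) • lcross (γ t) (ν t) + s • ν t + (s ^ 2 / 2) • (γ t + ε • lcross (γ t) (ν t)))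
    (μN : ℝ → ℝ → Fin 3 → ℝ)
    (hμN : ∀ s t, μN s t = lcross (xN s t) (νN s t)) :
    ∀ s : ℝ, ∀ t ∈ I,
      (mink (xN s t) (xN s t) = -1 ∧ 0 < xN s t 0) ∧
      mink (νN s t) (νN s t) = 1 ∧
      mink (xN s t) (νN s t) = 0 ∧
      mink (deriv (fun u => xN u t) s) (νN s t) = 0 ∧
      deriv (fun u => xN u t) s = ε • μN s t ∧
      deriv (fun u => νN u t) s = ε • μN s t ∧
      deriv (fun τ => xN s τ) t
        = (-ε * (m t + s * n t)) • νN s t + (s ^ 2 * n t / 2 + s * m t) • μN s t ∧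
      deriv (fun τ => νN s τ) t
        = (-ε * (m t + s * n t)) • xN s t + (s ^ 2 * n t / 2 + s * m t + n t) • μN s t := by
  have hε2 : ε * ε = 1 := by rcases hε with rfl | rfl <;> norm_num
  have hee : ε ^ 2 = 1 := by rw [sq]; exact hε2
  intro s t ht
  obtain ⟨hGG, hG0⟩ := hH t ht
  have hVV := hS t ht
  have hGV := hO t ht
  -- frame facts
  have hMM : mink (lcross (γ t) (ν t)) (lcross (γ t) (ν t)) = 1 := by
    rw [U2, hGG, hVV, hGV]; norm_num
  have hGMo : mink (γ t) (lcross (γ t) (ν t)) = 0 := U3 _ _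
  have hVMo : mink (ν t) (lcross (γ t) (ν t)) = 0 := U4 _ _
  have hGM : lcross (γ t) (lcross (γ t) (ν t)) = -ν t := by
    rw [U1, hGG, hGV]; module
  have hVM : lcross (ν t) (lcross (γ t) (ν t)) = -γ t := by
    rw [U1b, hGV, hVV]; module
  have hMV : lcross (lcross (γ t) (ν t)) (ν t) = γ t := by
    rw [U1c, hVV, hGV]; module
  have hMG : lcross (lcross (γ t) (ν t)) (γ t) = ν t := by
    rw [U1d, hGV, hGG]; module
  -- combo forms
  have hx : xN s t = (1 + s ^ 2 / 2) • γ t + s • ν t + (ε * (s ^ 2 / 2)) • lcross (γ t) (ν t) := by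
    rw [hxN]; module
  have hn' : νN s t = (s ^ 2 / 2) • γ t + s • ν t + (ε * (s ^ 2 / 2 - 1)) • lcross (γ t) (ν t) := by
    rw [hνN]; module
  have hμ : μN s t = (ε * s) • γ t + ε • ν t + s • lcross (γ t) (ν t) := by
    rw [hμN, hx, hn', lcross_combo, hVM, hMG]; module
  -- s-derivatives
  have hfun1 : (fun u => xN u t)
      = (fun u : ℝ => γ t + u • ν t + (u ^ 2 / 2) • (γ t + ε • lcross (γ t) (ν t))) :=
    funext fun u => hxN u t
  have hfun2 : (fun u => νN u t)
      = (fun u : ℝ => (-ε) • lcross (γ t) (ν t) + u • ν t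
          + (u ^ 2 / 2) • (γ t + ε • lcross (γ t) (ν t))) :=
    funext fun u => hνN u t
  have hD1 : HasDerivAt
      (fun u : ℝ => γ t + u • ν t + (u ^ 2 / 2) • (γ t + ε • lcross (γ t) (ν t)))
      ((0 : Fin 3 → ℝ) + (1 : ℝ) • ν t
        + (((2 : ℕ) * s ^ (2 - 1)) / 2) • (γ t + ε • lcross (γ t) (ν t))) s :=
    ((hasDerivAt_const s _).add ((hasDerivAt_id s).smul_const _)).add
      (((hasDerivAt_pow 2 s).div_const 2).smul_const _)
  have hD2 : HasDerivAt
      (fun u : ℝ => (-ε) • lcross (γ t) (ν t) + u • ν t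
        + (u ^ 2 / 2) • (γ t + ε • lcross (γ t) (ν t)))
      ((0 : Fin 3 → ℝ) + (1 : ℝ) • ν t
        + (((2 : ℕ) * s ^ (2 - 1)) / 2) • (γ t + ε • lcross (γ t) (ν t))) s :=
    ((hasDerivAt_const s _).add ((hasDerivAt_id s).smul_const _)).add
      (((hasDerivAt_pow 2 s).div_const 2).smul_const _)
  have hds1 : deriv (fun u => xN u t) s
      = s • γ t + (1 : ℝ) • ν t + (ε * s) • lcross (γ t) (ν t) := by
    rw [hfun1, hD1.deriv]; match_scalars <;> push_cast <;> ring
  have hds2 : deriv (fun u => νN u t) s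
      = s • γ t + (1 : ℝ) • ν t + (ε * s) • lcross (γ t) (ν t) := by
    rw [hfun2, hD2.deriv]; match_scalars <;> push_cast <;> ring
  -- t-derivatives
  have hγd : HasDerivAt γ (m t • lcross (γ t) (ν t)) t := by
    have h := (hγ.differentiable (by simp) t).hasDerivAt; rwa [hdγ t ht] at h
  have hνd : HasDerivAt ν (n t • lcross (γ t) (ν t)) t := by
    have h := (hν.differentiable (by simp) t).hasDerivAt; rwa [hdν t ht] at h
  have hW0 := lcross_hasDerivAt hγd hνd
  have hWval : lcross (m t • lcross (γ t) (ν t)) (ν t)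
      + lcross (γ t) (n t • lcross (γ t) (ν t)) = m t • γ t - n t • ν t := by
    rw [lcross_smul_left, lcross_smul_right, hMV, hGM]; module
  rw [hWval] at hW0
  have hXt : HasDerivAt (fun τ => γ τ + s • ν τ
        + (s ^ 2 / 2) • (γ τ + ε • lcross (γ τ) (ν τ)))
      (m t • lcross (γ t) (ν t) + s • (n t • lcross (γ t) (ν t))
        + (s ^ 2 / 2) • (m t • lcross (γ t) (ν t) + ε • (m t • γ t - n t • ν t))) t :=
    (hγd.add (hνd.const_smul s)).add ((hγd.add (hW0.const_smul ε)).const_smul (s ^ 2 / 2))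
  have hNt : HasDerivAt (fun τ => (-ε) • lcross (γ τ) (ν τ) + s • ν τ
        + (s ^ 2 / 2) • (γ τ + ε • lcross (γ τ) (ν τ)))
      ((-ε) • (m t • γ t - n t • ν t) + s • (n t • lcross (γ t) (ν t))
        + (s ^ 2 / 2) • (m t • lcross (γ t) (ν t) + ε • (m t • γ t - n t • ν t))) t :=
    ((hW0.const_smul (-ε)).add (hνd.const_smul s)).add
      ((hγd.add (hW0.const_smul ε)).const_smul (s ^ 2 / 2))
  refine ⟨⟨?_, ?_⟩, ?_, ?_, ?_, ?_, ?_, ?_, ?_⟩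
  · rw [hx, mink_combo, hGG, hVV, hGV, hGMo, hVMo, hMM]
    linear_combination (s ^ 4 / 4) * hε2
  · -- positivity
    have hGG' : -(γ t 0 * γ t 0) + γ t 1 * γ t 1 + γ t 2 * γ t 2 = -1 := hGG
    have hVV' : -(ν t 0 * ν t 0) + ν t 1 * ν t 1 + ν t 2 * ν t 2 = 1 := hVV
    have hGV' : -(γ t 0 * ν t 0) + γ t 1 * ν t 1 + γ t 2 * ν t 2 = 0 := hGV
    have hM0 : (lcross (γ t) (ν t) 0) ^ 2 = γ t 0 ^ 2 - ν t 0 ^ 2 - 1 := by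
      show (-(γ t 1 * ν t 2 - γ t 2 * ν t 1)) ^ 2 = _
      linear_combination (ν t 1 ^ 2 + ν t 2 ^ 2) * hGG' + (γ t 0 ^ 2 - 1) * hVV'
        - (γ t 0 * ν t 0 + γ t 1 * ν t 1 + γ t 2 * ν t 2) * hGV'
    have hx0 : xN s t 0 = (1 + s ^ 2 / 2) * γ t 0 + s * ν t 0
        + (ε * (s ^ 2 / 2)) * lcross (γ t) (ν t) 0 := by
      rw [hx]; simp [Pi.add_apply, Pi.smul_apply, smul_eq_mul]
    rw [hx0]
    have hgw : γ t 0 ^ 2 = 1 + ν t 0 ^ 2 + lcross (γ t) (ν t) 0 ^ 2 := by linarith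
    have hpos : (0:ℝ) < (1 + s ^ 2 / 2) * γ t 0 :=
      mul_pos (by positivity) hG0
    have key : (s * ν t 0 + ε * (s ^ 2 / 2) * lcross (γ t) (ν t) 0) ^ 2
        < ((1 + s ^ 2 / 2) * γ t 0) ^ 2 := by
      rcases hε with rfl | rfl <;>
        nlinarith [hgw, sq_nonneg (s * lcross (γ t) (ν t) 0 - s ^ 2 * ν t 0 / 2),
          sq_nonneg (s * lcross (γ t) (ν t) 0 + s ^ 2 * ν t 0 / 2),
          sq_nonneg s, sq_nonneg (s * s), sq_nonneg (ν t 0),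
          sq_nonneg (lcross (γ t) (ν t) 0)]
    nlinarith [key, hpos]
  · rw [hn', mink_combo, hGG, hVV, hGV, hGMo, hVMo, hMM]
    linear_combination (s ^ 2 / 2 - 1) ^ 2 * hε2
  · rw [hx, hn', mink_combo, hGG, hVV, hGV, hGMo, hVMo, hMM]
    linear_combination (s ^ 2 / 2) * (s ^ 2 / 2 - 1) * hε2
  · rw [hds1, hn', mink_combo, hGG, hVV, hGV, hGMo, hVMo, hMM]
    linear_combination (s * (s ^ 2 / 2 - 1)) * hε2
  · rw [hds1, hμ]
    match_scalars <;> (first | ring1 | (ring_nf; simp only [hee]; try ring1))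
  · rw [hds2, hμ]
    match_scalars <;> (first | ring1 | (ring_nf; simp only [hee]; try ring1))
  · rw [show (fun τ => xN s τ) = _ from funext fun τ => hxN s τ, hXt.deriv, hn', hμ]
    match_scalars <;> (first | ring1 | (ring_nf; simp only [hee]; try ring1))
  · rw [show (fun τ => νN s τ) = _ from funext fun τ => hνN s τ, hNt.deriv, hx, hμ]
    match_scalars <;> (first | ring1 | (ring_nf; simp only [hee]; try ring1))
end
end

section
/- Let (γ,ν) : I → Δ₁ be a spacelike Legendre curve with curvature (m,n), μ = γ∧ν, and suppose there exists a smooth function f : I → ℝ with m(t) + f(t)n(t) = 0 for all t ∈ I. Define x_N^±(s,t) = γ(t) + sν(t) + (s²/2)(γ(t) ± μ(t)), ν_N^±(s,t) = ∓μ(t) + sν(t) + (s²/2)(γ(t) ± μ(t)), μ_N^± = x_N^± ∧ ν_N^±, and the horocyclic evolute Ev^±(γ)(t) = γ(t) + f(t)ν(t) + (f(t)²/2)(γ(t) ± μ(t)). Then Ev^±(γ)(t) = x_N^±(f(t),t) for all t, the function L_N^±(s,t) = ∓(m(t)+s n(t)) vanishes along (f(t),t), and for every t ∈ I the derivative (d/dt)Ev^±(γ)(t)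 is a scalar multiple of μ_N^±(f(t),t); that is, the horocyclic evolute is an envelope of the one-parameter family of normal horocycles of γ. -/
noncomputable section

/-- The horocyclic evolute `Ev^±(γ)` is an envelope of the one-parameter family of normal
horocycles `x_N^±` of `γ`: it equals `x_N^±(f(t),t)`, the function
`L_N^±(s,t) = ∓(m(t)+sn(t))` vanishes along `(f(t),t)`, and its derivative is a scalar
multiple of `μ_N^±(f(t),t)`.  The sign `±` is encoded by `ε ∈ {1, -1}`. -/
theorem stmt_2 (I : Set ℝ) (hI : I.OrdConnected)
    (γ ν : ℝ → Fin 3 → ℝ) (m n : ℝ → ℝ)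
    (hγ : ContDiff ℝ (⊤ : ℕ∞) γ) (hν : ContDiff ℝ (⊤ : ℕ∞) ν)
    (hm : ContDiff ℝ (⊤ : ℕ∞) m) (hn : ContDiff ℝ (⊤ : ℕ∞) n)
    (hH : ∀ t ∈ I, mink (γ t) (γ t) = -1 ∧ 0 < γ t 0)
    (hS : ∀ t ∈ I, mink (ν t) (ν t) = 1)
    (hO : ∀ t ∈ I, mink (γ t) (ν t) = 0)
    (hdγ : ∀ t ∈ I, deriv γ t = m t • lcross (γ t) (ν t))
    (hdν : ∀ t ∈ I, deriv ν t = n t • lcross (γ t) (ν t))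
    (ε : ℝ) (hε : ε = 1 ∨ ε = -1)
    (f : ℝ → ℝ) (hf : ContDiff ℝ (⊤ : ℕ∞) f)
    (hfmn : ∀ t ∈ I, m t + f t * n t = 0)
    (xN νN : ℝ → ℝ → Fin 3 → ℝ)
    (hxN : ∀ s t, xN s t
      = γ t + s • ν t + (s ^ 2 / 2) • (γ t + ε • lcross (γ t) (ν t)))
    (hνN : ∀ s t, νN s t
      = (-ε) • lcross (γ t) (ν t) + s • ν t + (s ^ 2 / 2) • (γ t + ε • lcross (γ t) (ν t)))
    (Ev : ℝ → Fin 3 → ℝ)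
    (hEv : ∀ t, Ev t
      = γ t + f t • ν t + (f t ^ 2 / 2) • (γ t + ε • lcross (γ t) (ν t))) :
    ∀ t ∈ I,
      Ev t = xN (f t) t ∧
      -ε * (m t + f t * n t) = 0 ∧
      ∃ c : ℝ, deriv Ev t = c • lcross (xN (f t) t) (νN (f t) t) := by
  intro t ht
  have hH1 : -(γ t 0 * γ t 0) + γ t 1 * γ t 1 + γ t 2 * γ t 2 = -1 := (hH t ht).1
  have hS1 : -(ν t 0 * ν t 0) + ν t 1 * ν t 1 + ν t 2 * ν t 2 = 1 := hS t ht
  have hO1 : -(γ t 0 * ν t 0) + γ t 1 * ν t 1 + γ t 2 * ν t 2 = 0 := hO t ht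
  have hE : ε ^ 2 = 1 := by rcases hε with h | h <;> rw [h] <;> norm_num
  have hP : m t + f t * n t = 0 := hfmn t ht
  refine ⟨by rw [hEv, hxN], by rw [hP, mul_zero], ?_⟩
  -- derivatives of the ingredients
  have hg' : HasDerivAt γ (m t • lcross (γ t) (ν t)) t := by
    have h := (hγ.differentiable (by simp) t).hasDerivAt
    rwa [hdγ t ht] at h
  have hv' : HasDerivAt ν (n t • lcross (γ t) (ν t)) t := by
    have h := (hν.differentiable (by simp) t).hasDerivAt
    rwa [hdν t ht] at h
  have hf' : HasDerivAt f (deriv f t) t := (hf.differentiable (by simp) t).hasDerivAt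
  have hgi : ∀ i, HasDerivAt (fun s => γ s i) (m t * lcross (γ t) (ν t) i) t := by
    intro i; simpa using hasDerivAt_pi.1 hg' i
  have hvi : ∀ i, HasDerivAt (fun s => ν s i) (n t * lcross (γ t) (ν t) i) t := by
    intro i; simpa using hasDerivAt_pi.1 hv' i
  -- derivative of μ = γ ∧ ν
  have hμ : HasDerivAt (fun s => lcross (γ s) (ν s))
      (lcross (m t • lcross (γ t) (ν t)) (ν t)
        + lcross (γ t) (n t • lcross (γ t) (ν t))) t := by
    rw [hasDerivAt_pi]
    intro i
    fin_cases i
    · show HasDerivAt (fun s => -(γ s 1 * ν s 2 - γ s 2 * ν s 1)) _ t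
      refine HasDerivAt.congr_deriv ((((hgi 1).mul (hvi 2)).sub ((hgi 2).mul (hvi 1))).neg) ?_
      simp [lcross]; ring
    · show HasDerivAt (fun s => -(γ s 0 * ν s 2 - γ s 2 * ν s 0)) _ t
      refine HasDerivAt.congr_deriv ((((hgi 0).mul (hvi 2)).sub ((hgi 2).mul (hvi 0))).neg) ?_
      simp [lcross]; ring
    · show HasDerivAt (fun s => γ s 0 * ν s 1 - γ s 1 * ν s 0) _ t
      refine HasDerivAt.congr_deriv (((hgi 0).mul (hvi 1)).sub ((hgi 1).mul (hvi 0))) ?_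
      simp [lcross]; ring
  -- derivative of f²/2
  have hsq : HasDerivAt (fun s => f s ^ 2 / 2) (f t * deriv f t) t := by
    have h := (hf'.pow 2).div_const 2
    refine HasDerivAt.congr_deriv (h) ?_
    ring
  -- derivative of the whole evolute
  have hEvfun : Ev = fun s => γ s + f s • ν s
      + (f s ^ 2 / 2) • (γ s + ε • lcross (γ s) (ν s)) := funext hEv
  have hin : HasDerivAt (fun s => γ s + ε • lcross (γ s) (ν s))
      (m t • lcross (γ t) (ν t)
        + ε • (lcross (m t • lcross (γ t) (ν t)) (ν t)
          + lcross (γ t) (n t • lcross (γ t) (ν t)))) t :=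
    hg'.add (hμ.const_smul ε)
  have hD : HasDerivAt Ev
      ((m t • lcross (γ t) (ν t)
          + (f t • (n t • lcross (γ t) (ν t)) + deriv f t • ν t))
        + ((f t ^ 2 / 2) • (m t • lcross (γ t) (ν t)
            + ε • (lcross (m t • lcross (γ t) (ν t)) (ν t)
              + lcross (γ t) (n t • lcross (γ t) (ν t))))
          + (f t * deriv f t) • (γ t + ε • lcross (γ t) (ν t)))) t := by
    rw [hEvfun]
    exact (hg'.add (hf'.smul hv')).add (hsq.smul hin)
  refine ⟨ε * deriv f t - f t ^ 2 * n t / 2, ?_⟩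
  rw [hD.deriv, hxN, hνN]
  funext i
  fin_cases i
  · simp [lcross, Matrix.vecHead, Matrix.vecTail, Pi.add_apply, Pi.smul_apply, smul_eq_mul]
    linear_combination
        ((f t ^ 2 / 2) * ε * n t * ν t 0
          + (ε * deriv f t - f t ^ 2 * n t / 2) * ε * ν t 0) * hH1
      + ((f t ^ 2 / 2) * ε * m t * γ t 0
          - (ε * deriv f t - f t ^ 2 * n t / 2) * ε * f t * γ t 0) * hS1
      + (-((f t ^ 2 / 2) * ε * (m t * ν t 0 + n t * γ t 0))
          - (ε * deriv f t - f t ^ 2 * n t / 2) * (ε * γ t 0 - ε * f t * ν t 0)) * hO1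
      + (-(deriv f t) * (ν t 0 + f t * γ t 0)) * hE
      + ((1 + f t ^ 2 / 2) * (-(γ t 1 * ν t 2 - γ t 2 * ν t 1))
          + (f t ^ 2 / 2) * ε * γ t 0) * hP
  · simp [lcross, Matrix.vecHead, Matrix.vecTail, Pi.add_apply, Pi.smul_apply, smul_eq_mul]
    linear_combination
        ((f t ^ 2 / 2) * ε * n t * ν t 1
          + (ε * deriv f t - f t ^ 2 * n t / 2) * ε * ν t 1) * hH1
      + ((f t ^ 2 / 2) * ε * m t * γ t 1
          - (ε * deriv f t - f t ^ 2 * n t / 2) * ε * f t * γ t 1) * hS1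
      + (-((f t ^ 2 / 2) * ε * (m t * ν t 1 + n t * γ t 1))
          - (ε * deriv f t - f t ^ 2 * n t / 2) * (ε * γ t 1 - ε * f t * ν t 1)) * hO1
      + (-(deriv f t) * (ν t 1 + f t * γ t 1)) * hE
      + ((1 + f t ^ 2 / 2) * (-(γ t 0 * ν t 2 - γ t 2 * ν t 0))
          + (f t ^ 2 / 2) * ε * γ t 1) * hP
  · simp [lcross, Matrix.vecHead, Matrix.vecTail, Pi.add_apply, Pi.smul_apply, smul_eq_mul]
    linear_combination
        ((f t ^ 2 / 2) * ε * n t * ν t 2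
          + (ε * deriv f t - f t ^ 2 * n t / 2) * ε * ν t 2) * hH1
      + ((f t ^ 2 / 2) * ε * m t * γ t 2
          - (ε * deriv f t - f t ^ 2 * n t / 2) * ε * f t * γ t 2) * hS1
      + (-((f t ^ 2 / 2) * ε * (m t * ν t 2 + n t * γ t 2))
          - (ε * deriv f t - f t ^ 2 * n t / 2) * (ε * γ t 2 - ε * f t * ν t 2)) * hO1
      + (-(deriv f t) * (ν t 2 + f t * γ t 2)) * hE
      + ((1 + f t ^ 2 / 2) * (γ t 0 * ν t 1 - γ t 1 * ν t 0)
          + (f t ^ 2 / 2) * ε * γ t 2) * hP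
end
end

section
/- Let (γ,ν) : I → Δ₁ be a spacelike Legendre curve with curvature (m,n), μ = γ∧ν, and suppose there exists a smooth function f : I → ℝ with m(t) + f(t)n(t) = 0 for all t ∈ I. Let Ev^±(γ)(t) = γ(t) + f(t)ν(t) + (f(t)²/2)(γ(t) ± μ(t)) be the horocyclic evolute. Then for any t₀ ∈ I, the derivative (d/dt)Ev^±(γ)(t₀) = 0 if and only if −2ḟ(t₀) ± f(t₀)²n(t₀) = 0. -/
noncomputable section

lemma hasDerivAt_lcross {x y : ℝ → Fin 3 → ℝ} {x' y' : Fin 3 → ℝ} {t : ℝ}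
    (hx : HasDerivAt x x' t) (hy : HasDerivAt y y' t) :
    HasDerivAt (fun s => lcross (x s) (y s)) (lcross x' (y t) + lcross (x t) y') t := by
  rw [hasDerivAt_pi] at hx hy ⊢
  intro i
  fin_cases i <;> simp [lcross]
  · convert (((hx 1).mul (hy 2)).sub ((hx 2).mul (hy 1))).neg using 1 <;> (try (funext s)) <;> (try simp only [Pi.mul_apply, Pi.sub_apply, Pi.neg_apply]) <;> ring
  · convert (((hx 0).mul (hy 2)).sub ((hx 2).mul (hy 0))).neg using 1 <;> (try (funext s)) <;> (try simp only [Pi.mul_apply, Pi.sub_apply, Pi.neg_apply]) <;> ring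
  · convert ((hx 0).mul (hy 1)).sub ((hx 1).mul (hy 0)) using 1 <;> (try (funext s)) <;> (try simp only [Pi.mul_apply, Pi.sub_apply, Pi.neg_apply]) <;> ring

/-- The horocyclic evolute `Ev^±(γ)` is singular at `t₀ ∈ I` if and only if
`−2ḟ(t₀) ± f(t₀)²n(t₀) = 0`.  The sign `±` is encoded by `ε ∈ {1, -1}`. -/
theorem stmt_5 (I : Set ℝ) (hI : I.OrdConnected)
    (γ ν : ℝ → Fin 3 → ℝ) (m n : ℝ → ℝ)
    (hγ : ContDiff ℝ (⊤ : ℕ∞) γ) (hν : ContDiff ℝ (⊤ : ℕ∞) ν)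
    (hm : ContDiff ℝ (⊤ : ℕ∞) m) (hn : ContDiff ℝ (⊤ : ℕ∞) n)
    (hH : ∀ t ∈ I, mink (γ t) (γ t) = -1 ∧ 0 < γ t 0)
    (hS : ∀ t ∈ I, mink (ν t) (ν t) = 1)
    (hO : ∀ t ∈ I, mink (γ t) (ν t) = 0)
    (hdγ : ∀ t ∈ I, deriv γ t = m t • lcross (γ t) (ν t))
    (hdν : ∀ t ∈ I, deriv ν t = n t • lcross (γ t) (ν t))
    (ε : ℝ) (hε : ε = 1 ∨ ε = -1)
    (f : ℝ → ℝ) (hf : ContDiff ℝ (⊤ : ℕ∞) f)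
    (hfmn : ∀ t ∈ I, m t + f t * n t = 0)
    (Ev : ℝ → Fin 3 → ℝ)
    (hEv : ∀ t, Ev t
      = γ t + f t • ν t + (f t ^ 2 / 2) • (γ t + ε • lcross (γ t) (ν t))) :
    ∀ t₀ ∈ I, deriv Ev t₀ = 0 ↔ -2 * deriv f t₀ + ε * (f t₀ ^ 2 * n t₀) = 0 := by
  have hEv' : Ev = fun t => γ t + f t • ν t + (f t ^ 2 / 2) • (γ t + ε • lcross (γ t) (ν t)) :=
    funext hEv
  subst hEv'
  intro t₀ ht₀
  have hε2 : ε * ε = 1 := by rcases hε with h | h <;> rw [h] <;> norm_num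
  -- notation
  set u : Fin 3 → ℝ := lcross (γ t₀) (ν t₀) with hu
  have hg := (hH t₀ ht₀).1
  have hv := hS t₀ ht₀
  have ho := hO t₀ ht₀
  have hmn := hfmn t₀ ht₀
  -- derivatives at t₀
  have hγd : HasDerivAt γ (m t₀ • u) t₀ := by
    have := (hγ.differentiable (by simp) t₀).hasDerivAt
    rwa [hdγ t₀ ht₀] at this
  have hνd : HasDerivAt ν (n t₀ • u) t₀ := by
    have := (hν.differentiable (by simp) t₀).hasDerivAt
    rwa [hdν t₀ ht₀] at this
  have hfd : HasDerivAt f (deriv f t₀) t₀ := (hf.differentiable (by simp) t₀).hasDerivAt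
  have hud : HasDerivAt (fun s => lcross (γ s) (ν s))
      (lcross (m t₀ • u) (ν t₀) + lcross (γ t₀) (n t₀ • u)) t₀ :=
    hasDerivAt_lcross hγd hνd
  have hf2d : HasDerivAt (fun s => f s ^ 2 / 2) (f t₀ * deriv f t₀) t₀ := by
    have : HasDerivAt (fun s => f s ^ 2 / 2) _ t₀ := ((hfd.fun_pow 2).div_const 2)
    convert this using 1
    ring
  have hED : HasDerivAt (fun t => γ t + f t • ν t + (f t ^ 2 / 2) • (γ t + ε • lcross (γ t) (ν t)))
      ((m t₀ • u) + (f t₀ • (n t₀ • u) + deriv f t₀ • ν t₀)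
        + ((f t₀ ^ 2 / 2) • ((m t₀ • u) + ε • (lcross (m t₀ • u) (ν t₀) + lcross (γ t₀) (n t₀ • u)))
          + (f t₀ * deriv f t₀) • (γ t₀ + ε • u))) t₀ := by
    exact (hγd.add (hfd.smul hνd)).add
      (hf2d.smul (hγd.add (hud.const_smul ε)))
  set c : ℝ := deriv f t₀ - ε * (f t₀ ^ 2 * n t₀) / 2 with hc
  set w : Fin 3 → ℝ := ν t₀ + f t₀ • γ t₀ + (ε * f t₀) • u with hw
  have hm0 : m t₀ = -(f t₀ * n t₀) := by linarith
  simp only [mink] at hg hv ho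
  have h1 : lcross u (ν t₀) = γ t₀ := by
    funext i
    fin_cases i <;> simp [lcross, hu] <;>
      [linear_combination (γ t₀ 0) * hv - (ν t₀ 0) * ho;
       linear_combination (γ t₀ 1) * hv - (ν t₀ 1) * ho;
       linear_combination (γ t₀ 2) * hv - (ν t₀ 2) * ho]
  have h2 : lcross (γ t₀) u = -ν t₀ := by
    funext i
    fin_cases i <;> simp [lcross, hu] <;>
      [linear_combination (ν t₀ 0) * hg - (γ t₀ 0) * ho;
       linear_combination (ν t₀ 1) * hg - (γ t₀ 1) * ho;
       linear_combination (ν t₀ 2) * hg - (γ t₀ 2) * ho]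
  have hsl : ∀ (a : ℝ) (x y : Fin 3 → ℝ), lcross (a • x) y = a • lcross x y := by
    intro a x y; funext i; fin_cases i <;> simp [lcross] <;> ring
  have hsr : ∀ (a : ℝ) (x y : Fin 3 → ℝ), lcross x (a • y) = a • lcross x y := by
    intro a x y; funext i; fin_cases i <;> simp [lcross] <;> ring
  have hDcw : deriv (fun t => γ t + f t • ν t + (f t ^ 2 / 2) • (γ t + ε • lcross (γ t) (ν t))) t₀
      = c • w := by
    rw [hED.deriv, hsl, hsr, h1, h2]
    funext i
    simp only [hw, hc, Pi.add_apply, Pi.smul_apply, Pi.neg_apply, smul_eq_mul]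
    rw [hm0]
    rcases hε with h | h <;> rw [h] <;> ring
  rw [hDcw]
  have hwv : mink w (ν t₀) = 1 := by
    simp only [hw, hu, mink, lcross, Pi.add_apply, Pi.smul_apply, smul_eq_mul,
      Matrix.cons_val_zero, Matrix.cons_val_one, Matrix.head_cons,
      Matrix.cons_val_two, Matrix.tail_cons]
    linear_combination hv + f t₀ * ho
  constructor
  · intro h0
    have h1 : mink (c • w) (ν t₀) = 0 := by rw [h0]; simp [mink]
    have h2 : mink (c • w) (ν t₀) = c * mink w (ν t₀) := by
      simp only [mink, Pi.smul_apply, smul_eq_mul]; ring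
    rw [h2, hwv, mul_one] at h1
    rw [hc] at h1
    linarith
  · intro h0
    have hc0 : c = 0 := by rw [hc]; linarith
    rw [hc0, zero_smul]
end
end

section
/- Let (γ,ν) : I → Δ₁ be a spacelike Legendre curve with curvature (m,n), μ = γ∧ν, and let λ_± : I → ℝ be a smooth solution of the Bernoulli equation λ̇_±(t) = ∓(λ_±(t)²n(t)/2 + λ_±(t)m(t)). Define the horocyclic parallel P^±(γ,λ_±)(t) = γ(t) + λ_±(t)ν(t) + (λ_±(t)²/2)(γ(t) ± μ(t)) and ν_P^±(t) = λ_±(t)γ(t) + ν(t) ± λ_±(t)μ(t). Then (P^±(γ,λ_±), ν_P^±) : I → Δ₁ is a spacelike Legendre curve, and with μ_P^± = P^±(γ,λ_±) ∧ ν_P^± its curvature is (m_P^±, n_P^±) = (λ_±n + m, n), i.e. (d/dt)P^±(γ,λ_±) = (λ_±n+m)·μ_P^± and (d/dt)ν_P^± = n·μ_P^±. -/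
noncomputable section

/-- `(P^±(γ,λ_±), ν_P^±)` is a spacelike Legendre curve with curvature
`(m_P^±, n_P^±) = (λ_±n + m, n)`, where `λ_±` solves the Bernoulli equation
`λ̇_± = ∓(λ_±²n/2 + λ_±m)`.  The sign `±` is encoded by `ε ∈ {1, -1}`. -/
theorem stmt_7 (I : Set ℝ) (hI : I.OrdConnected)
    (γ ν : ℝ → Fin 3 → ℝ) (m n : ℝ → ℝ)
    (hγ : ContDiff ℝ (⊤ : ℕ∞) γ) (hν : ContDiff ℝ (⊤ : ℕ∞) ν)
    (hm : ContDiff ℝ (⊤ : ℕ∞) m) (hn : ContDiff ℝ (⊤ : ℕ∞) n)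
    (hH : ∀ t ∈ I, mink (γ t) (γ t) = -1 ∧ 0 < γ t 0)
    (hS : ∀ t ∈ I, mink (ν t) (ν t) = 1)
    (hO : ∀ t ∈ I, mink (γ t) (ν t) = 0)
    (hdγ : ∀ t ∈ I, deriv γ t = m t • lcross (γ t) (ν t))
    (hdν : ∀ t ∈ I, deriv ν t = n t • lcross (γ t) (ν t))
    (ε : ℝ) (hε : ε = 1 ∨ ε = -1)
    (lam : ℝ → ℝ) (hlam : ContDiff ℝ (⊤ : ℕ∞) lam)
    (hlamODE : ∀ t ∈ I, deriv lam t = -ε * (lam t ^ 2 * n t / 2 + lam t * m t))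
    (P νP : ℝ → Fin 3 → ℝ)
    (hP : ∀ t, P t
      = γ t + lam t • ν t + (lam t ^ 2 / 2) • (γ t + ε • lcross (γ t) (ν t)))
    (hνP : ∀ t, νP t
      = lam t • γ t + ν t + (ε * lam t) • lcross (γ t) (ν t))
    (μP : ℝ → Fin 3 → ℝ) (hμP : ∀ t, μP t = lcross (P t) (νP t)) :
    ∀ t ∈ I,
      (mink (P t) (P t) = -1 ∧ 0 < P t 0) ∧
      mink (νP t) (νP t) = 1 ∧
      mink (P t) (νP t) = 0 ∧
      deriv P t = (lam t * n t + m t) • μP t ∧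
      deriv νP t = n t • μP t := by
  intro t ht
  obtain ⟨hA, ha0⟩ := hH t ht
  have hB := hS t ht
  have hC := hO t ht
  simp only [mink] at hA hB hC
  have hE : ε ^ 2 = 1 := by rcases hε with h | h <;> rw [h] <;> norm_num
  have hγ' : HasDerivAt γ (m t • lcross (γ t) (ν t)) t := by
    have h := (hγ.differentiable (by simp) t).hasDerivAt
    rwa [hdγ t ht] at h
  have hν' : HasDerivAt ν (n t • lcross (γ t) (ν t)) t := by
    have h := (hν.differentiable (by simp) t).hasDerivAt
    rwa [hdν t ht] at h
  have hl' : HasDerivAt lam (-ε * (lam t ^ 2 * n t / 2 + lam t * m t)) t := by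
    have h := (hlam.differentiable (by simp) t).hasDerivAt
    rwa [hlamODE t ht] at h
  have hγi := hasDerivAt_pi.mp hγ'
  have hνi := hasDerivAt_pi.mp hν'
  have hc' : HasDerivAt (fun s => lcross (γ s) (ν s))
      (lcross (m t • lcross (γ t) (ν t)) (ν t)
        + lcross (γ t) (n t • lcross (γ t) (ν t))) t := by
    apply hasDerivAt_pi.mpr
    intro i
    fin_cases i
    · have h := (((hγi 1).mul (hνi 2)).sub ((hγi 2).mul (hνi 1))).neg
      convert h using 1
      · funext x
        simp [lcross]
      simp [lcross]
      ring
    · have h := ((((hγi 0).mul (hνi 2)).sub ((hγi 2).mul (hνi 0))).neg)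
      convert h using 1
      · funext x
        simp [lcross]
      simp [lcross]
      ring
    · have h := (((hγi 0).mul (hνi 1)).sub ((hγi 1).mul (hνi 0)))
      convert h using 1
      · funext x
        simp [lcross]
      simp [lcross]
      ring
  have hPd : HasDerivAt
      (fun s => γ s + lam s • ν s + (lam s ^ 2 / 2) • (γ s + ε • lcross (γ s) (ν s)))
      (m t • lcross (γ t) (ν t)
        + (lam t • (n t • lcross (γ t) (ν t)) + (-ε * (lam t ^ 2 * n t / 2 + lam t * m t)) • ν t)
        + ((lam t ^ 2 / 2) • (m t • lcross (γ t) (ν t)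
            + ε • (lcross (m t • lcross (γ t) (ν t)) (ν t)
              + lcross (γ t) (n t • lcross (γ t) (ν t))))
          + ((2 : ℕ) * lam t ^ (2 - 1) * (-ε * (lam t ^ 2 * n t / 2 + lam t * m t)) / 2)
            • (γ t + ε • lcross (γ t) (ν t)))) t :=
    (hγ'.add (hl'.smul hν')).add
      (((hl'.pow 2).div_const 2).smul (hγ'.add (hc'.const_smul ε)))
  have hNd : HasDerivAt
      (fun s => lam s • γ s + ν s + (ε * lam s) • lcross (γ s) (ν s))
      ((lam t • (m t • lcross (γ t) (ν t)) + (-ε * (lam t ^ 2 * n t / 2 + lam t * m t)) • γ t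
        + n t • lcross (γ t) (ν t))
        + ((ε * lam t) • (lcross (m t • lcross (γ t) (ν t)) (ν t)
            + lcross (γ t) (n t • lcross (γ t) (ν t)))
          + (ε * (-ε * (lam t ^ 2 * n t / 2 + lam t * m t))) • lcross (γ t) (ν t))) t :=
    ((hl'.smul hγ').add hν').add ((hl'.const_mul ε).smul hc')
  have hPfun : P = fun s => γ s + lam s • ν s + (lam s ^ 2 / 2) • (γ s + ε • lcross (γ s) (ν s)) :=
    funext hP
  have hNfun : νP = fun s => lam s • γ s + ν s + (ε * lam s) • lcross (γ s) (ν s) :=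
    funext hνP
  rw [← hPfun] at hPd
  rw [← hNfun] at hNd
  have hPP : mink (P t) (P t) = -1 := by
    rw [hP t]
    simp only [mink, lcross, Pi.add_apply, Pi.smul_apply, smul_eq_mul, Matrix.cons_val_zero, Matrix.cons_val_one, Matrix.cons_val_two, Matrix.head_cons, Matrix.tail_cons]
    linear_combination (2 * lam t + lam t^3 + (-1/4:ℝ) * γ t 2 * ν t 2 * lam t^4 + (1/2:ℝ) * γ t 2 * ν t 2 * lam t^4 * ε^2 + (-1/4:ℝ) * γ t 1 * ν t 1 * lam t^4 + (1/2:ℝ) * γ t 1 * ν t 1 * lam t^4 * ε^2 + (-1/4:ℝ) * γ t 0 * ν t 0 * lam t^4) * hC + (1 + lam t^2 + (1/4:ℝ) * ν t 2^2 * lam t^4 + (-1/4:ℝ) * ν t 2^2 * lam t^4 * ε^2 + (1/4:ℝ) * ν t 1^2 * lam t^4 + (-1/4:ℝ) * ν t 1^2 * lam t^4 * ε^2) * hA + (lam t^2 + (-1/4:ℝ) * γ t 2^2 * lam t^4 * ε^2 + (-1/4:ℝ) * γ t 1^2 * lam t^4 * ε^2 + (1/4:ℝ) * γ t 0^2 *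 lam t^4) * hB + ((1/4:ℝ) * ν t 2^2 * lam t^4 + (1/4:ℝ) * ν t 1^2 * lam t^4 + (-1/4:ℝ) * γ t 2^2 * lam t^4 + (1/4:ℝ) * γ t 2^2 * ν t 1^2 * lam t^4 + (-1/2:ℝ) * γ t 1 * γ t 2 * ν t 1 * ν t 2 * lam t^4 + (-1/4:ℝ) * γ t 1^2 * lam t^4 + (1/4:ℝ) * γ t 1^2 * ν t 2^2 * lam t^4) * hE
  have hP0 : 0 < P t 0 := by
    have hPA : mink (P t) (γ t) = -(1 + lam t ^ 2 / 2) := by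
      rw [hP t]
      simp only [mink, lcross, Pi.add_apply, Pi.smul_apply, smul_eq_mul, Matrix.cons_val_zero, Matrix.cons_val_one, Matrix.cons_val_two, Matrix.head_cons, Matrix.tail_cons]
      linear_combination (lam t) * hC + (1 + (1/2:ℝ) * lam t^2) * hA
    by_contra h
    push_neg at h
    simp only [mink] at hPP hPA
    nlinarith [sq_nonneg (P t 1 * γ t 2 - P t 2 * γ t 1),
      mul_nonneg (neg_nonneg.2 h) ha0.le, sq_nonneg (lam t),
      sq_nonneg (P t 0), sq_nonneg (γ t 0), ha0]
  refine ⟨⟨hPP, hP0⟩, ?_, ?_, ?_, ?_⟩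
  · rw [hνP t]
    simp only [mink, lcross, Pi.add_apply, Pi.smul_apply, smul_eq_mul, Matrix.cons_val_zero, Matrix.cons_val_one, Matrix.cons_val_two, Matrix.head_cons, Matrix.tail_cons]
    linear_combination (2 * lam t + (-1:ℝ) * γ t 2 * ν t 2 * lam t^2 + 2 * γ t 2 * ν t 2 * lam t^2 * ε^2 + (-1:ℝ) * γ t 1 * ν t 1 * lam t^2 + 2 * γ t 1 * ν t 1 * lam t^2 * ε^2 + (-1:ℝ) * γ t 0 * ν t 0 * lam t^2) * hC + (ν t 2^2 * lam t^2 + (-1:ℝ) * ν t 2^2 * lam t^2 * ε^2 + ν t 1^2 * lam t^2 + (-1:ℝ) * ν t 1^2 * lam t^2 * ε^2) * hA + (1 + (-1:ℝ) * γ t 2^2 * lam t^2 * ε^2 + (-1:ℝ) * γ t 1^2 * lam t^2 * ε^2 + γ t 0^2 * lam t^2) * hB + (ν t 2^2 * lam t^2 + ν t 1^2 * lam t^2 + (-1:ℝ) * γ t 2^2 * lam t^2 + γ t 2^2 * ν t 1^2 * lam t^2 + (-2:ℝ) * γ t 1 * γ t 2 * ν t 1 * ν t 2 * lam t^2 + (-1:ℝ)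 * γ t 1^2 * lam t^2 + γ t 1^2 * ν t 2^2 * lam t^2) * hE
  · rw [hP t, hνP t]
    simp only [mink, lcross, Pi.add_apply, Pi.smul_apply, smul_eq_mul, Matrix.cons_val_zero, Matrix.cons_val_one, Matrix.cons_val_two, Matrix.head_cons, Matrix.tail_cons]
    linear_combination (1 + (3/2:ℝ) * lam t^2 + (-1/2:ℝ) * γ t 2 * ν t 2 * lam t^3 + γ t 2 * ν t 2 * lam t^3 * ε^2 + (-1/2:ℝ) * γ t 1 * ν t 1 * lam t^3 + γ t 1 * ν t 1 * lam t^3 * ε^2 + (-1/2:ℝ) * γ t 0 * ν t 0 * lam t^3) * hC + (lam t + (1/2:ℝ) * ν t 2^2 * lam t^3 + (-1/2:ℝ) * ν t 2^2 * lam t^3 * ε^2 + (1/2:ℝ) * ν t 1^2 * lam t^3 + (-1/2:ℝ) * ν t 1^2 * lam t^3 * ε^2) * hA + (lam t + (-1/2:ℝ) * γ t 2^2 * lam t^3 * ε^2 + (-1/2:ℝ) * γ t 1^2 * lam t^3 * ε^2 + (1/2:ℝ) * γ t 0^2 * lam t^3) * hB + ((1/2:ℝ) * ν t 2^2 * lam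 t^3 + (1/2:ℝ) * ν t 1^2 * lam t^3 + (-1/2:ℝ) * γ t 2^2 * lam t^3 + (1/2:ℝ) * γ t 2^2 * ν t 1^2 * lam t^3 + (-1:ℝ) * γ t 1 * γ t 2 * ν t 1 * ν t 2 * lam t^3 + (-1/2:ℝ) * γ t 1^2 * lam t^3 + (1/2:ℝ) * γ t 1^2 * ν t 2^2 * lam t^3) * hE
  · rw [hPd.deriv, hμP t, hP t, hνP t]
    funext i
    fin_cases i
    · simp only [lcross, Pi.add_apply, Pi.smul_apply, smul_eq_mul, Matrix.cons_val_zero, Matrix.cons_val_one, Matrix.cons_val_two, Matrix.head_cons, Matrix.tail_cons, Fin.zero_eta, Fin.mk_one, Fin.reduceFinMk, Nat.reduceSub, Nat.cast_ofNat, pow_one]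
      linear_combination ((-1:ℝ) * ν t 0 * lam t^2 * ε * m t + (-1/2:ℝ) * ν t 0 * lam t^3 * ε * n t + γ t 0 * lam t * ε * m t + (1/2:ℝ) * γ t 0 * lam t^2 * ε * n t) * hC + ((-1:ℝ) * ν t 0 * lam t * ε * m t + (-1/2:ℝ) * ν t 0 * lam t^2 * ε * n t) * hA + (γ t 0 * lam t^2 * ε * m t + (1/2:ℝ) * γ t 0 * lam t^3 * ε * n t) * hB + ((-1:ℝ) * γ t 2 * ν t 1 * lam t^2 * m t + (-1/2:ℝ) * γ t 2 * ν t 1 * lam t^3 * n t + γ t 1 * ν t 2 * lam t^2 * m t + (1/2:ℝ) * γ t 1 * ν t 2 * lam t^3 * n t) * hE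
    · simp only [lcross, Pi.add_apply, Pi.smul_apply, smul_eq_mul, Matrix.cons_val_zero, Matrix.cons_val_one, Matrix.cons_val_two, Matrix.head_cons, Matrix.tail_cons, Fin.zero_eta, Fin.mk_one, Fin.reduceFinMk, Nat.reduceSub, Nat.cast_ofNat, pow_one]
      linear_combination ((-1:ℝ) * ν t 1 * lam t^2 * ε * m t + (-1/2:ℝ) * ν t 1 * lam t^3 * ε * n t + γ t 1 * lam t * ε * m t + (1/2:ℝ) * γ t 1 * lam t^2 * ε * n t) * hC + ((-1:ℝ) * ν t 1 * lam t * ε * m t + (-1/2:ℝ) * ν t 1 * lam t^2 * ε * n t) * hA + (γ t 1 * lam t^2 * ε * m t + (1/2:ℝ) * γ t 1 * lam t^3 * ε * n t) * hB + ((-1:ℝ) * γ t 2 * ν t 0 * lam t^2 * m t + (-1/2:ℝ) * γ t 2 * ν t 0 * lam t^3 * n t + γ t 0 * ν t 2 * lam t^2 * m t + (1/2:ℝ) * γ t 0 * ν t 2 * lam t^3 * n t) * hE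
    · simp only [lcross, Pi.add_apply, Pi.smul_apply, smul_eq_mul, Matrix.cons_val_zero, Matrix.cons_val_one, Matrix.cons_val_two, Matrix.head_cons, Matrix.tail_cons, Fin.zero_eta, Fin.mk_one, Fin.reduceFinMk, Nat.reduceSub, Nat.cast_ofNat, pow_one]
      linear_combination ((-1:ℝ) * ν t 2 * lam t^2 * ε * m t + (-1/2:ℝ) * ν t 2 * lam t^3 * ε * n t + γ t 2 * lam t * ε * m t + (1/2:ℝ) * γ t 2 * lam t^2 * ε * n t) * hC + ((-1:ℝ) * ν t 2 * lam t * ε * m t + (-1/2:ℝ) * ν t 2 * lam t^2 * ε * n t) * hA + (γ t 2 * lam t^2 * ε * m t + (1/2:ℝ) * γ t 2 * lam t^3 * ε * n t) * hB + (γ t 1 * ν t 0 * lam t^2 * m t + (1/2:ℝ) * γ t 1 * ν t 0 * lam t^3 * n t + (-1:ℝ) * γ t 0 * ν t 1 * lam t^2 * m t + (-1/2:ℝ) * γ t 0 * ν t 1 * lam t^3 * n t) * hE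
  · rw [hNd.deriv, hμP t, hP t, hνP t]
    funext i
    fin_cases i
    · simp only [lcross, Pi.add_apply, Pi.smul_apply, smul_eq_mul, Matrix.cons_val_zero, Matrix.cons_val_one, Matrix.cons_val_two, Matrix.head_cons, Matrix.tail_cons, Fin.zero_eta, Fin.mk_one, Fin.reduceFinMk, Nat.reduceSub, Nat.cast_ofNat, pow_one]
      linear_combination ((-1:ℝ) * ν t 0 * lam t * ε * m t + (-1/2:ℝ) * ν t 0 * lam t^2 * ε * n t) * hC + (γ t 0 * lam t * ε * m t + (1/2:ℝ) * γ t 0 * lam t^2 * ε * n t) * hB + ((-1:ℝ) * γ t 2 * ν t 1 * lam t * m t + (-1/2:ℝ) * γ t 2 * ν t 1 * lam t^2 * n t + γ t 1 * ν t 2 * lam t * m t + (1/2:ℝ) * γ t 1 * ν t 2 * lam t^2 * n t) * hE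
    · simp only [lcross, Pi.add_apply, Pi.smul_apply, smul_eq_mul, Matrix.cons_val_zero, Matrix.cons_val_one, Matrix.cons_val_two, Matrix.head_cons, Matrix.tail_cons, Fin.zero_eta, Fin.mk_one, Fin.reduceFinMk, Nat.reduceSub, Nat.cast_ofNat, pow_one]
      linear_combination ((-1:ℝ) * ν t 1 * lam t * ε * m t + (-1/2:ℝ) * ν t 1 * lam t^2 * ε * n t) * hC + (γ t 1 * lam t * ε * m t + (1/2:ℝ) * γ t 1 * lam t^2 * ε * n t) * hB + ((-1:ℝ) * γ t 2 * ν t 0 * lam t * m t + (-1/2:ℝ) * γ t 2 * ν t 0 * lam t^2 * n t + γ t 0 * ν t 2 * lam t * m t + (1/2:ℝ) * γ t 0 * ν t 2 * lam t^2 * n t) * hE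
    · simp only [lcross, Pi.add_apply, Pi.smul_apply, smul_eq_mul, Matrix.cons_val_zero, Matrix.cons_val_one, Matrix.cons_val_two, Matrix.head_cons, Matrix.tail_cons, Fin.zero_eta, Fin.mk_one, Fin.reduceFinMk, Nat.reduceSub, Nat.cast_ofNat, pow_one]
      linear_combination ((-1:ℝ) * ν t 2 * lam t * ε * m t + (-1/2:ℝ) * ν t 2 * lam t^2 * ε * n t) * hC + (γ t 2 * lam t * ε * m t + (1/2:ℝ) * γ t 2 * lam t^2 * ε * n t) * hB + (γ t 1 * ν t 0 * lam t * m t + (1/2:ℝ) * γ t 1 * ν t 0 * lam t^2 * n t + (-1:ℝ) * γ t 0 * ν t 1 * lam t * m t + (-1/2:ℝ) * γ t 0 * ν t 1 * lam t^2 * n t) * hE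
end
end

section
/- Let (γ,ν) : I → Δ₁ be a spacelike Legendre curve with curvature (m,n), μ = γ∧ν, with Reg(ν) = {t : n(t) ≠ 0} dense in I, and suppose there exists a smooth function f : I → ℝ with m(t) + f(t)n(t) = 0 for all t ∈ I. Let λ_± : I → ℝ be a smooth solution of λ̇_± = ∓(λ_±²n/2 + λ_±m), let P^±(γ,λ_±) = γ + λ_±ν + (λ_±²/2)(γ ± μ) be a horocyclic parallel with ν_P^± = λ_±γ + ν ± λ_±μ and curvature (m_P^±, n_P^±) = (λ_±n+m, n). Then f_P^± := f − λ_± satisfies m_P^±(t) + f_P^±(t)n_P^±(t) = 0 for all t, so the horocyclic evolutes of the parallels exist, and: (1) the horocyclic evolute with sign + of (P^+(γ,λ_+), ν_P^+) equals Ev^+(γ), and the horocyclic evolute with sign − of (P^−(γ,λ_−), ν_P^−) equals Ev^−(γ); (2) the horocyclic evolute with sign + of (P^−(γ,λ_−), −ν_P^−) equals Ev^−(γ), and the horocyclic evolute with sign − of (P^+(γ,λ_+), −ν_P^+) equals Ev^+(γ). Here Ev^±(γ)(t) = γ(t) + f(t)ν(t) + (f(t)²/2)(γ(t) ± μ(t)).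 -/
noncomputable section

/-- The horocyclic evolute of a horocyclic parallel `P^±(γ,λ_±)` coincides with the
horocyclic evolute of `γ`: with `f_P^± = f − λ_±` one has `m_P^± + f_P^± n_P^± = 0`, the
evolute with sign `±` of `(P^±(γ,λ_±), ν_P^±)` equals `Ev^±(γ)`, and the evolute with sign
`∓` of `(P^±(γ,λ_±), −ν_P^±)` (built with `−f_P^±`) equals `Ev^±(γ)`.
The sign `±` is encoded by `ε ∈ {1, -1}`. -/
theorem stmt_11 (I : Set ℝ) (hI : I.OrdConnected)
    (γ ν : ℝ → Fin 3 → ℝ) (m n : ℝ → ℝ)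
    (hγ : ContDiff ℝ (⊤ : ℕ∞) γ) (hν : ContDiff ℝ (⊤ : ℕ∞) ν)
    (hm : ContDiff ℝ (⊤ : ℕ∞) m) (hn : ContDiff ℝ (⊤ : ℕ∞) n)
    (hH : ∀ t ∈ I, mink (γ t) (γ t) = -1 ∧ 0 < γ t 0)
    (hS : ∀ t ∈ I, mink (ν t) (ν t) = 1)
    (hO : ∀ t ∈ I, mink (γ t) (ν t) = 0)
    (hdγ : ∀ t ∈ I, deriv γ t = m t • lcross (γ t) (ν t))
    (hdν : ∀ t ∈ I, deriv ν t = n t • lcross (γ t) (ν t))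
    (hdense : I ⊆ closure {t ∈ I | n t ≠ 0})
    (ε : ℝ) (hε : ε = 1 ∨ ε = -1)
    (f : ℝ → ℝ) (hf : ContDiff ℝ (⊤ : ℕ∞) f)
    (hfmn : ∀ t ∈ I, m t + f t * n t = 0)
    (lam : ℝ → ℝ) (hlam : ContDiff ℝ (⊤ : ℕ∞) lam)
    (hlamODE : ∀ t ∈ I, deriv lam t = -ε * (lam t ^ 2 * n t / 2 + lam t * m t))
    (P νP : ℝ → Fin 3 → ℝ)
    (hP : ∀ t, P t
      = γ t + lam t • ν t + (lam t ^ 2 / 2) • (γ t + ε • lcross (γ t) (ν t)))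
    (hνP : ∀ t, νP t
      = lam t • γ t + ν t + (ε * lam t) • lcross (γ t) (ν t))
    (Ev : ℝ → Fin 3 → ℝ)
    (hEv : ∀ t, Ev t
      = γ t + f t • ν t + (f t ^ 2 / 2) • (γ t + ε • lcross (γ t) (ν t))) :
    ∀ t ∈ I,
      (lam t * n t + m t) + (f t - lam t) * n t = 0 ∧
      P t + (f t - lam t) • νP t
        + ((f t - lam t) ^ 2 / 2) • (P t + ε • lcross (P t) (νP t)) = Ev t ∧
      P t + (-(f t - lam t)) • (-(νP t))
        + ((-(f t - lam t)) ^ 2 / 2) • (P t + (-ε) • lcross (P t) (-(νP t))) = Ev t := by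
  intro t ht
  obtain ⟨hg, -⟩ := hH t ht
  have hs := hS t ht
  have ho := hO t ht
  have he : ε ^ 2 = 1 := by rcases hε with h | h <;> rw [h] <;> norm_num
  unfold mink at hg hs ho
  have hPi : ∀ i : Fin 3, P t i
      = γ t i + lam t * ν t i + lam t ^ 2 / 2 * (γ t i + ε * lcross (γ t) (ν t) i) := by
    intro i; rw [hP]; simp only [Pi.add_apply, Pi.smul_apply, smul_eq_mul]; try ring
  have hνPi : ∀ i : Fin 3, νP t i
      = lam t * γ t i + ν t i + ε * lam t * lcross (γ t) (ν t) i := by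
    intro i; rw [hνP]; simp only [Pi.add_apply, Pi.smul_apply, smul_eq_mul]; try ring
  have hEvi : ∀ i : Fin 3, Ev t i
      = γ t i + f t * ν t i + f t ^ 2 / 2 * (γ t i + ε * lcross (γ t) (ν t) i) := by
    intro i; rw [hEv]; simp only [Pi.add_apply, Pi.smul_apply, smul_eq_mul]; try ring
  have key : ∀ i : Fin 3,
      (γ t i + lam t * ν t i + lam t ^ 2 / 2 * (γ t i + ε * lcross (γ t) (ν t) i))
        + (f t - lam t) * (lam t * γ t i + ν t i + ε * lam t * lcross (γ t) (ν t) i)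
        + (f t - lam t) ^ 2 / 2 *
            ((γ t i + lam t * ν t i + lam t ^ 2 / 2 * (γ t i + ε * lcross (γ t) (ν t) i))
              + ε * lcross (P t) (νP t) i)
      = γ t i + f t * ν t i + f t ^ 2 / 2 * (γ t i + ε * lcross (γ t) (ν t) i) := by
    intro i
    have hcr : lcross (P t) (νP t) i
        = lcross (fun j => γ t j + lam t * ν t j
              + lam t ^ 2 / 2 * (γ t j + ε * lcross (γ t) (ν t) j))
            (fun j => lam t * γ t j + ν t j + ε * lam t * lcross (γ t) (ν t) j) i := by
      congr 1 <;> funext j <;>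
        simp only [hP, hνP, Pi.add_apply, Pi.smul_apply, smul_eq_mul] <;> try ring
    rw [hcr]
    fin_cases i <;>
      simp only [lcross, Matrix.cons_val_zero, Matrix.cons_val_one, Matrix.head_cons,
        Matrix.cons_val_two, Matrix.tail_cons, Fin.zero_eta, Fin.mk_one, Fin.isValue,
        show (⟨2, by norm_num⟩ : Fin 3) = 2 from rfl]
    · linear_combination
        (ε ^ 2 * lam t * (f t - lam t) ^ 2 / 2 * ν t 0) * hg +
        (-(ε ^ 2 * lam t ^ 2 * (f t - lam t) ^ 2 / 4) * γ t 0) * hs +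
        (ε ^ 2 * (f t - lam t) ^ 2 * (lam t ^ 2 / 4 * ν t 0 - lam t / 2 * γ t 0)) * ho +
        ((f t - lam t) ^ 2 * (-(lam t ^ 2) / 4 * γ t 0 - lam t / 2 * ν t 0)) * he
    · linear_combination
        (ε ^ 2 * lam t * (f t - lam t) ^ 2 / 2 * ν t 1) * hg +
        (-(ε ^ 2 * lam t ^ 2 * (f t - lam t) ^ 2 / 4) * γ t 1) * hs +
        (ε ^ 2 * (f t - lam t) ^ 2 * (lam t ^ 2 / 4 * ν t 1 - lam t / 2 * γ t 1)) * ho +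
        ((f t - lam t) ^ 2 * (-(lam t ^ 2) / 4 * γ t 1 - lam t / 2 * ν t 1)) * he
    · linear_combination
        (ε ^ 2 * lam t * (f t - lam t) ^ 2 / 2 * ν t 2) * hg +
        (-(ε ^ 2 * lam t ^ 2 * (f t - lam t) ^ 2 / 4) * γ t 2) * hs +
        (ε ^ 2 * (f t - lam t) ^ 2 * (lam t ^ 2 / 4 * ν t 2 - lam t / 2 * γ t 2)) * ho +
        ((f t - lam t) ^ 2 * (-(lam t ^ 2) / 4 * γ t 2 - lam t / 2 * ν t 2)) * he
  refine ⟨by linear_combination hfmn t ht, ?_, ?_⟩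
  · funext i
    simp only [Pi.add_apply, Pi.smul_apply, smul_eq_mul]
    rw [hPi i, hνPi i, hEvi i]
    linear_combination key i
  · funext i
    have hneg : lcross (P t) (-(νP t)) i = -(lcross (P t) (νP t) i) := by
      fin_cases i <;> simp [lcross] <;> ring
    simp only [Pi.add_apply, Pi.smul_apply, Pi.neg_apply, smul_eq_mul, hneg]
    rw [hPi i, hνPi i, hEvi i]
    linear_combination key i
end
end

section
/- Let (γ,ν) : I → Δ₁ be a spacelike Legendre curve with curvature (m,n), μ = γ∧ν, and let s_± : I → ℝ be a smooth solution of the Riccati equation ṡ_±(t) = ((m(t) ± n(t))/2)s_±(t)² − m(t), defining the horocyclic involute Inv^±(γ,s_±)(t) = γ(t) + s_±(t)μ(t) + (s_±(t)²/2)(γ(t) ± ν(t)). Suppose t : Ĩ → I is a smooth surjective change of parameter with ṫ(u) > 0 for all u ∈ Ĩ. Then (γ̃,ν̃) := (γ∘t, ν∘t) is a spacelike Legendre curve with curvature (m̃(u), ñ(u)) = (m(t(u))ṫ(u), n(t(u))ṫ(u)), the function s̃_±(u) := s_±(t(u)) solves the Riccati equation (d/du)s̃_±(u) = ((m̃(u)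 ± ñ(u))/2)s̃_±(u)² − m̃(u), and Inv^±(γ,s_±)(t(u)) = Inv^±(γ̃, s̃_±)(u) for all u ∈ Ĩ; that is, the horocyclic involute is independent of the parameter change. -/
noncomputable section

/-- The horocyclic involute is independent of a positive change of parameter `φ : Ĩ → I`:
`(γ∘φ, ν∘φ)` is a spacelike Legendre curve with curvature `(m∘φ·φ̇, n∘φ·φ̇)`, the function
`s̃_± = s_±∘φ` solves the corresponding Riccati equation, and
`Inv^±(γ,s_±)(φ(u)) = Inv^±(γ̃,s̃_±)(u)`.  The sign `±` is encoded by `ε ∈ {1, -1}`. -/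
theorem stmt_12 (I Itil : Set ℝ) (hI : I.OrdConnected) (hItil : Itil.OrdConnected)
    (γ ν : ℝ → Fin 3 → ℝ) (m n : ℝ → ℝ)
    (hγ : ContDiff ℝ (⊤ : ℕ∞) γ) (hν : ContDiff ℝ (⊤ : ℕ∞) ν)
    (hm : ContDiff ℝ (⊤ : ℕ∞) m) (hn : ContDiff ℝ (⊤ : ℕ∞) n)
    (hH : ∀ t ∈ I, mink (γ t) (γ t) = -1 ∧ 0 < γ t 0)
    (hS : ∀ t ∈ I, mink (ν t) (ν t) = 1)
    (hO : ∀ t ∈ I, mink (γ t) (ν t) = 0)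
    (hdγ : ∀ t ∈ I, deriv γ t = m t • lcross (γ t) (ν t))
    (hdν : ∀ t ∈ I, deriv ν t = n t • lcross (γ t) (ν t))
    (ε : ℝ) (hε : ε = 1 ∨ ε = -1)
    (s : ℝ → ℝ) (hs : ContDiff ℝ (⊤ : ℕ∞) s)
    (hsODE : ∀ t ∈ I, deriv s t = (m t + ε * n t) / 2 * s t ^ 2 - m t)
    (Inv : ℝ → Fin 3 → ℝ)
    (hInv : ∀ t, Inv t
      = γ t + s t • lcross (γ t) (ν t) + (s t ^ 2 / 2) • (γ t + ε • ν t))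
    (φ : ℝ → ℝ) (hφ : ContDiff ℝ (⊤ : ℕ∞) φ)
    (hφmaps : Set.MapsTo φ Itil I) (hφsurj : Set.SurjOn φ Itil I)
    (hφpos : ∀ u ∈ Itil, 0 < deriv φ u) :
    ∀ u ∈ Itil,
      (mink (γ (φ u)) (γ (φ u)) = -1 ∧ 0 < γ (φ u) 0) ∧
      mink (ν (φ u)) (ν (φ u)) = 1 ∧
      mink (γ (φ u)) (ν (φ u)) = 0 ∧
      deriv (fun v => γ (φ v)) u
        = (m (φ u) * deriv φ u) • lcross (γ (φ u)) (ν (φ u)) ∧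
      deriv (fun v => ν (φ v)) u
        = (n (φ u) * deriv φ u) • lcross (γ (φ u)) (ν (φ u)) ∧
      deriv (fun v => s (φ v)) u
        = (m (φ u) * deriv φ u + ε * (n (φ u) * deriv φ u)) / 2 * (s (φ u)) ^ 2
          - m (φ u) * deriv φ u ∧
      Inv (φ u)
        = γ (φ u) + s (φ u) • lcross (γ (φ u)) (ν (φ u))
          + ((s (φ u)) ^ 2 / 2) • (γ (φ u) + ε • ν (φ u)) := by

  intro u hu
  have hφI : φ u ∈ I := hφmaps hu
  have hφ' : HasDerivAt φ (deriv φ u) u :=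
    (hφ.differentiable (by simp) u).hasDerivAt
  have hγ' : HasDerivAt γ (deriv γ (φ u)) (φ u) :=
    (hγ.differentiable (by simp) (φ u)).hasDerivAt
  have hν' : HasDerivAt ν (deriv ν (φ u)) (φ u) :=
    (hν.differentiable (by simp) (φ u)).hasDerivAt
  have hs' : HasDerivAt s (deriv s (φ u)) (φ u) :=
    (hs.differentiable (by simp) (φ u)).hasDerivAt
  have hγc : deriv (fun v => γ (φ v)) u = deriv φ u • deriv γ (φ u) :=
    (hγ'.scomp u hφ').deriv
  have hνc : deriv (fun v => ν (φ v)) u = deriv φ u • deriv ν (φ u) :=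
    (hν'.scomp u hφ').deriv
  have hsc : deriv (fun v => s (φ v)) u = deriv s (φ u) * deriv φ u :=
    (hs'.comp u hφ').deriv
  refine ⟨hH _ hφI, hS _ hφI, hO _ hφI, ?_, ?_, ?_, hInv _⟩
  · rw [hγc, hdγ _ hφI, smul_smul, mul_comm]
  · rw [hνc, hdν _ hφI, smul_smul, mul_comm]
  · rw [hsc, hsODE _ hφI]; ring
end
end

section
/- Let (γ,ν) : I → Δ₁ be a spacelike Legendre curve with curvature (m,n), μ = γ∧ν, and let s_± : I → ℝ be a smooth solution of the Riccati equation ṡ_±(t) = ((m(t) ± n(t))/2)s_±(t)² − m(t). Define x_T^±(s,t) = γ(t) + sμ(t) + (s²/2)(γ(t) ± ν(t)), ν_T^±(s,t) = ∓ν(t) + sμ(t) + (s²/2)(γ(t) ± ν(t)), and the horocyclic involute Inv^±(γ,s_±)(t) = γ(t) + s_±(t)μ(t) + (s_±(t)²/2)(γ(t) ± ν(t)). Then Inv^±(γ,s_±)(t) = x_T^±(s_±(t),t) for all t, and for every t ∈ I the derivative (d/dt)Inv^±(γ,s_±)(t) is a scalar multiple of ν_T^±(s_±(t),t); that is, the horocyclic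 involute is a normal envelope of the one-parameter family of tangent horocycles of γ. -/
noncomputable section

/-- The horocyclic involute `Inv^±(γ,s_±)` is a normal envelope of the one-parameter family
of tangent horocycles `x_T^±` of `γ`: it equals `x_T^±(s_±(t),t)` and its derivative is a
scalar multiple of `ν_T^±(s_±(t),t)`.  The sign `±` is encoded by `ε ∈ {1, -1}`. -/
theorem stmt_14 (I : Set ℝ) (hI : I.OrdConnected)
    (γ ν : ℝ → Fin 3 → ℝ) (m n : ℝ → ℝ)
    (hγ : ContDiff ℝ (⊤ : ℕ∞) γ) (hν : ContDiff ℝ (⊤ : ℕ∞) ν)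
    (hm : ContDiff ℝ (⊤ : ℕ∞) m) (hn : ContDiff ℝ (⊤ : ℕ∞) n)
    (hH : ∀ t ∈ I, mink (γ t) (γ t) = -1 ∧ 0 < γ t 0)
    (hS : ∀ t ∈ I, mink (ν t) (ν t) = 1)
    (hO : ∀ t ∈ I, mink (γ t) (ν t) = 0)
    (hdγ : ∀ t ∈ I, deriv γ t = m t • lcross (γ t) (ν t))
    (hdν : ∀ t ∈ I, deriv ν t = n t • lcross (γ t) (ν t))
    (ε : ℝ) (hε : ε = 1 ∨ ε = -1)
    (s : ℝ → ℝ) (hs : ContDiff ℝ (⊤ : ℕ∞) s)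
    (hsODE : ∀ t ∈ I, deriv s t = (m t + ε * n t) / 2 * s t ^ 2 - m t)
    (xT νT : ℝ → ℝ → Fin 3 → ℝ)
    (hxT : ∀ σ t, xT σ t
      = γ t + σ • lcross (γ t) (ν t) + (σ ^ 2 / 2) • (γ t + ε • ν t))
    (hνT : ∀ σ t, νT σ t
      = (-ε) • ν t + σ • lcross (γ t) (ν t) + (σ ^ 2 / 2) • (γ t + ε • ν t))
    (Inv : ℝ → Fin 3 → ℝ)
    (hInv : ∀ t, Inv t
      = γ t + s t • lcross (γ t) (ν t) + (s t ^ 2 / 2) • (γ t + ε • ν t)) :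
    ∀ t ∈ I,
      Inv t = xT (s t) t ∧
      ∃ c : ℝ, deriv Inv t = c • νT (s t) t := by
  intro t ht
  obtain ⟨hH1, -⟩ := hH t ht
  have hS1 := hS t ht
  have hO1 := hO t ht
  have hdγ1 := hdγ t ht
  have hdν1 := hdν t ht
  have hds := hsODE t ht
  refine ⟨by rw [hInv t, hxT (s t) t], ?_⟩
  have hγd : HasDerivAt γ (deriv γ t) t := ((hγ.differentiable (by simp)) t).hasDerivAt
  have hνd : HasDerivAt ν (deriv ν t) t := ((hν.differentiable (by simp)) t).hasDerivAt
  have hsd : HasDerivAt s (deriv s t) t := ((hs.differentiable (by simp)) t).hasDerivAt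
  have hg : ∀ i, HasDerivAt (fun u => γ u i) (deriv γ t i) t := hasDerivAt_pi.mp hγd
  have hnn : ∀ i, HasDerivAt (fun u => ν u i) (deriv ν t i) t := hasDerivAt_pi.mp hνd
  have hμ : HasDerivAt (fun u => lcross (γ u) (ν u))
      (![-((deriv γ t 1 * ν t 2 + γ t 1 * deriv ν t 2)
          - (deriv γ t 2 * ν t 1 + γ t 2 * deriv ν t 1)),
        -((deriv γ t 0 * ν t 2 + γ t 0 * deriv ν t 2)
          - (deriv γ t 2 * ν t 0 + γ t 2 * deriv ν t 0)),
        (deriv γ t 0 * ν t 1 + γ t 0 * deriv ν t 1)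
          - (deriv γ t 1 * ν t 0 + γ t 1 * deriv ν t 0)]) t := by
    rw [hasDerivAt_pi]
    intro i
    fin_cases i
    · simpa [lcross, Pi.mul_def, Pi.sub_def, Pi.neg_def] using (((hg 1).mul (hnn 2)).sub ((hg 2).mul (hnn 1))).neg
    · simpa [lcross, Pi.mul_def, Pi.sub_def, Pi.neg_def] using (((hg 0).mul (hnn 2)).sub ((hg 2).mul (hnn 0))).neg
    · simpa [lcross, Pi.mul_def, Pi.sub_def] using ((hg 0).mul (hnn 1)).sub ((hg 1).mul (hnn 0))
  have h2 := hsd.smul hμ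
  have hq := (hsd.pow 2).div_const 2
  have h3 := hq.smul (hγd.add (hνd.const_smul ε))
  have hID : HasDerivAt Inv
      (deriv γ t + (s t • (![-((deriv γ t 1 * ν t 2 + γ t 1 * deriv ν t 2)
          - (deriv γ t 2 * ν t 1 + γ t 2 * deriv ν t 1)),
        -((deriv γ t 0 * ν t 2 + γ t 0 * deriv ν t 2)
          - (deriv γ t 2 * ν t 0 + γ t 2 * deriv ν t 0)),
        (deriv γ t 0 * ν t 1 + γ t 0 * deriv ν t 1)
          - (deriv γ t 1 * ν t 0 + γ t 1 * deriv ν t 0)]) + deriv s t • lcross (γ t) (ν t)) +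
        ((s t ^ 2 / 2) • (deriv γ t + ε • deriv ν t) +
          (↑2 * s t ^ (2 - 1) * deriv s t / 2) • (γ t + ε • ν t))) t := by
    have hfun : Inv = fun u =>
        γ u + s u • lcross (γ u) (ν u) + (s u ^ 2 / 2) • (γ u + ε • ν u) := funext hInv
    rw [hfun]
    exact (hγd.add h2).add h3
  refine ⟨(m t + ε * n t) * s t, ?_⟩
  rw [hID.deriv, hνT]
  simp only [mink] at hH1 hS1 hO1
  funext i
  fin_cases i
  · rcases hε with rfl | rfl <;> simp [lcross, hdγ1, hdν1, hds, Matrix.vecHead, Matrix.vecTail, Pi.smul_apply, Pi.add_apply, smul_eq_mul] <;>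
      linear_combination (s t * m t * γ t 0) * hS1 - (s t * m t * ν t 0) * hO1 +
        (s t * n t * ν t 0) * hH1 - (s t * n t * γ t 0) * hO1
  · rcases hε with rfl | rfl <;> simp [lcross, hdγ1, hdν1, hds, Matrix.vecHead, Matrix.vecTail, Pi.smul_apply, Pi.add_apply, smul_eq_mul] <;>
      linear_combination (s t * m t * γ t 1) * hS1 - (s t * m t * ν t 1) * hO1 +
        (s t * n t * ν t 1) * hH1 - (s t * n t * γ t 1) * hO1
  · rcases hε with rfl | rfl <;> simp [lcross, hdγ1, hdν1, hds, Matrix.vecHead, Matrix.vecTail, Pi.smul_apply, Pi.add_apply, smul_eq_mul] <;>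
      linear_combination (s t * m t * γ t 2) * hS1 - (s t * m t * ν t 2) * hO1 +
        (s t * n t * ν t 2) * hH1 - (s t * n t * γ t 2) * hO1
end
end

section
/- Let (γ,ν) : I → Δ₁ be a spacelike Legendre curve with curvature (m,n), μ = γ∧ν, and let s_± : I → ℝ be a smooth solution of the Riccati equation ṡ_±(t) = ((m(t) ± n(t))/2)s_±(t)² − m(t). Define Inv^±(γ,s_±)(t) = γ(t) + s_±(t)μ(t) + (s_±(t)²/2)(γ(t) ± ν(t)) and ν_I^±(t) = −s_±(t)γ(t) − μ(t) ∓ s_±(t)ν(t). Then (Inv^±(γ,s_±), ν_I^±) : I → Δ₁ is a spacelike Legendre curve, and with μ_I^± = Inv^±(γ,s_±) ∧ ν_I^± its curvature is (m_I^±, n_I^±) = (−s_±(n ± m), n ± m), i.e. (d/dt)Inv^±(γ,s_±) = −s_±(n ± m)·μ_I^± and (d/dt)ν_I^± = (n ± m)·μ_I^±. -/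
noncomputable section

/-- `(Inv^±(γ,s_±), ν_I^±)` is a spacelike Legendre curve with curvature
`(m_I^±, n_I^±) = (−s_±(n ± m), n ± m)`.  The sign `±` is encoded by `ε ∈ {1, -1}`. -/
theorem stmt_16 (I : Set ℝ) (hI : I.OrdConnected)
    (γ ν : ℝ → Fin 3 → ℝ) (m n : ℝ → ℝ)
    (hγ : ContDiff ℝ (⊤ : ℕ∞) γ) (hν : ContDiff ℝ (⊤ : ℕ∞) ν)
    (hm : ContDiff ℝ (⊤ : ℕ∞) m) (hn : ContDiff ℝ (⊤ : ℕ∞) n)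
    (hH : ∀ t ∈ I, mink (γ t) (γ t) = -1 ∧ 0 < γ t 0)
    (hS : ∀ t ∈ I, mink (ν t) (ν t) = 1)
    (hO : ∀ t ∈ I, mink (γ t) (ν t) = 0)
    (hdγ : ∀ t ∈ I, deriv γ t = m t • lcross (γ t) (ν t))
    (hdν : ∀ t ∈ I, deriv ν t = n t • lcross (γ t) (ν t))
    (ε : ℝ) (hε : ε = 1 ∨ ε = -1)
    (s : ℝ → ℝ) (hs : ContDiff ℝ (⊤ : ℕ∞) s)
    (hsODE : ∀ t ∈ I, deriv s t = (m t + ε * n t) / 2 * s t ^ 2 - m t)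
    (Inv νI : ℝ → Fin 3 → ℝ)
    (hInv : ∀ t, Inv t
      = γ t + s t • lcross (γ t) (ν t) + (s t ^ 2 / 2) • (γ t + ε • ν t))
    (hνI : ∀ t, νI t
      = (-(s t)) • γ t - lcross (γ t) (ν t) + (-ε * s t) • ν t)
    (μI : ℝ → Fin 3 → ℝ) (hμI : ∀ t, μI t = lcross (Inv t) (νI t)) :
    ∀ t ∈ I,
      (mink (Inv t) (Inv t) = -1 ∧ 0 < Inv t 0) ∧
      mink (νI t) (νI t) = 1 ∧
      mink (Inv t) (νI t) = 0 ∧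
      deriv Inv t = (-(s t) * (n t + ε * m t)) • μI t ∧
      deriv νI t = (n t + ε * m t) • μI t := by
  intro t ht
  have hA := (hH t ht).1
  have hg0 := (hH t ht).2
  have hB := hS t ht
  have hC := hO t ht
  have hE : ε * ε = 1 := by rcases hε with rfl | rfl <;> norm_num
  simp only [mink] at hA hB hC
  -- derivative facts
  have hγd : HasDerivAt γ (m t • lcross (γ t) (ν t)) t := by
    have h := (hγ.differentiable (by simp) t).hasDerivAt
    rwa [hdγ t ht] at h
  have hνd : HasDerivAt ν (n t • lcross (γ t) (ν t)) t := by
    have h := (hν.differentiable (by simp) t).hasDerivAt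
    rwa [hdν t ht] at h
  have hsd : HasDerivAt s ((m t + ε * n t) / 2 * s t ^ 2 - m t) t := by
    have h := (hs.differentiable (by simp) t).hasDerivAt
    rwa [hsODE t ht] at h
  have hg := hasDerivAt_pi.1 hγd
  have hv := hasDerivAt_pi.1 hνd
  have hLd : HasDerivAt (fun u => lcross (γ u) (ν u))
      (lcross (m t • lcross (γ t) (ν t)) (ν t)
        + lcross (γ t) (n t • lcross (γ t) (ν t))) t := by
    apply hasDerivAt_pi.2
    intro i
    fin_cases i
    · have h := (((hg 1).mul (hv 2)).sub ((hg 2).mul (hv 1))).neg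
      convert h using 1 <;> simp [lcross] <;> ring <;> rfl
    · have h := (((hg 0).mul (hv 2)).sub ((hg 2).mul (hv 0))).neg
      convert h using 1 <;> simp [lcross] <;> ring <;> rfl
    · have h := ((hg 0).mul (hv 1)).sub ((hg 1).mul (hv 0))
      convert h using 1 <;> simp [lcross] <;> ring <;> rfl
  have hsq : HasDerivAt (fun u => s u ^ 2 / 2)
      ((2 : ℝ) * s t ^ (2 - 1) * ((m t + ε * n t) / 2 * s t ^ 2 - m t) / 2) t :=
    (hsd.pow 2).div_const 2
  have hGEd : HasDerivAt (fun u => γ u + ε • ν u)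
      (m t • lcross (γ t) (ν t) + ε • (n t • lcross (γ t) (ν t))) t :=
    hγd.add (hνd.const_smul ε)
  have hInvd : HasDerivAt Inv
      (m t • lcross (γ t) (ν t)
        + (s t • (lcross (m t • lcross (γ t) (ν t)) (ν t)
            + lcross (γ t) (n t • lcross (γ t) (ν t)))
          + ((m t + ε * n t) / 2 * s t ^ 2 - m t) • lcross (γ t) (ν t))
        + ((s t ^ 2 / 2) • (m t • lcross (γ t) (ν t) + ε • (n t • lcross (γ t) (ν t)))
          + ((2 : ℝ) * s t ^ (2 - 1) * ((m t + ε * n t) / 2 * s t ^ 2 - m t) / 2)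
            • (γ t + ε • ν t))) t := by
    have hF : Inv = fun u => γ u + s u • lcross (γ u) (ν u)
        + (s u ^ 2 / 2) • (γ u + ε • ν u) := funext hInv
    rw [hF]
    exact (hγd.add (hsd.smul hLd)).add (hsq.smul hGEd)
  have hνId : HasDerivAt νI
      (((-(s t)) • (m t • lcross (γ t) (ν t)) + (-((m t + ε * n t) / 2 * s t ^ 2 - m t)) • γ t)
        - (lcross (m t • lcross (γ t) (ν t)) (ν t)
            + lcross (γ t) (n t • lcross (γ t) (ν t)))
        + ((-ε * s t) • (n t • lcross (γ t) (ν t))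
          + (-ε * ((m t + ε * n t) / 2 * s t ^ 2 - m t)) • ν t)) t := by
    have hF : νI = fun u => (-(s u)) • γ u - lcross (γ u) (ν u) + (-ε * s u) • ν u :=
      funext hνI
    rw [hF]
    exact ((hsd.neg.smul hγd).sub hLd).add ((hsd.const_mul (-ε)).smul hνd)
  refine ⟨⟨?_, ?_⟩, ?_, ?_, ?_, ?_⟩
  · rw [hInv t]
    simp only [mink, lcross, Pi.add_apply, Pi.smul_apply, smul_eq_mul,
      Matrix.cons_val_zero, Matrix.cons_val_one, Matrix.head_cons, Matrix.cons_val_two,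
      Matrix.tail_cons]
    linear_combination ((1/4)*(s t)^4 + 1) * hA + ((γ t 0)^2*(s t)^2 + (-1)*(γ t 1)^2*(s t)^2 + (-1)*(γ t 2)^2*(s t)^2 + (1/4)*(ε)^2*(s t)^4) * hB + ((-1)*(γ t 0)*(ν t 0)*(s t)^2 + (γ t 1)*(ν t 1)*(s t)^2 + (γ t 2)*(ν t 2)*(s t)^2 + (1/2)*(ε)*(s t)^4 + (ε)*(s t)^2) * hC + ((1/4)*(s t)^4) * hE
  · -- positivity via intermediate value theorem
    set F0 : ℝ → ℝ := fun σ => γ t 0 + σ * (-(γ t 1 * ν t 2 - γ t 2 * ν t 1))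
      + σ ^ 2 / 2 * (γ t 0 + ε * ν t 0) with hF0
    set F1 : ℝ → ℝ := fun σ => γ t 1 + σ * (-(γ t 0 * ν t 2 - γ t 2 * ν t 0))
      + σ ^ 2 / 2 * (γ t 1 + ε * ν t 1) with hF1
    set F2 : ℝ → ℝ := fun σ => γ t 2 + σ * (γ t 0 * ν t 1 - γ t 1 * ν t 0)
      + σ ^ 2 / 2 * (γ t 2 + ε * ν t 2) with hF2
    have hid : ∀ σ : ℝ, -(F0 σ * F0 σ) + F1 σ * F1 σ + F2 σ * F2 σ = -1 := by
      intro σ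
      simp only [hF0, hF1, hF2]
      linear_combination ((1/4)*σ^4 + 1) * hA + ((γ t 0)^2*σ^2 + (-1)*(γ t 1)^2*σ^2 + (-1)*(γ t 2)^2*σ^2 + (1/4)*(ε)^2*σ^4) * hB + ((-1)*(γ t 0)*(ν t 0)*σ^2 + (γ t 1)*(ν t 1)*σ^2 + (γ t 2)*(ν t 2)*σ^2 + (1/2)*(ε)*σ^4 + (ε)*σ^2) * hC + ((1/4)*σ^4) * hE
    have hne : ∀ σ : ℝ, F0 σ ≠ 0 := by
      intro σ h0
      have h := hid σ
      rw [h0] at h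
      nlinarith [sq_nonneg (F1 σ), sq_nonneg (F2 σ)]
    have hcont : Continuous F0 := by
      simp only [hF0]; fun_prop
    have hzero : F0 0 = γ t 0 := by simp [hF0]
    have hpos : 0 < F0 (s t) := by
      by_contra h
      push_neg at h
      have hlt : F0 (s t) < 0 := lt_of_le_of_ne h (hne (s t))
      have hmem : (0 : ℝ) ∈ Set.uIcc (F0 0) (F0 (s t)) := by
        rw [Set.mem_uIcc]
        right
        constructor
        · exact le_of_lt hlt
        · rw [hzero]; exact le_of_lt hg0
      obtain ⟨σ, _, hσ⟩ := intermediate_value_uIcc hcont.continuousOn hmem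
      exact hne σ hσ
    have heq : Inv t 0 = F0 (s t) := by
      rw [hInv t]
      simp only [hF0, lcross, Pi.add_apply, Pi.smul_apply, smul_eq_mul,
        Matrix.cons_val_zero]
    rw [heq]; exact hpos
  · rw [hνI t]
    simp only [mink, lcross, Pi.add_apply, Pi.sub_apply, Pi.smul_apply, Pi.neg_apply,
      smul_eq_mul, Matrix.cons_val_zero, Matrix.cons_val_one, Matrix.head_cons,
      Matrix.cons_val_two, Matrix.tail_cons]
    linear_combination ((s t)^2 + (-1)) * hA + ((γ t 0)^2 + (-1)*(γ t 1)^2 + (-1)*(γ t 2)^2 + (ε)^2*(s t)^2) * hB + ((-1)*(γ t 0)*(ν t 0) + (γ t 1)*(ν t 1) + (γ t 2)*(ν t 2) + 2*(ε)*(s t)^2) * hC + ((s t)^2) * hE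
  · rw [hInv t, hνI t]
    simp only [mink, lcross, Pi.add_apply, Pi.sub_apply, Pi.smul_apply, Pi.neg_apply,
      smul_eq_mul, Matrix.cons_val_zero, Matrix.cons_val_one, Matrix.head_cons,
      Matrix.cons_val_two, Matrix.tail_cons]
    linear_combination ((-1/2)*(s t)^3) * hA + ((-1)*(γ t 0)^2*(s t) + (γ t 1)^2*(s t) + (γ t 2)^2*(s t) + (-1/2)*(ε)^2*(s t)^3) * hB + ((γ t 0)*(ν t 0)*(s t) + (-1)*(γ t 1)*(ν t 1)*(s t) + (-1)*(γ t 2)*(ν t 2)*(s t) + (-1)*(ε)*(s t)^3 + (-1)*(ε)*(s t)) * hC + ((-1/2)*(s t)^3) * hE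
  · rw [hInvd.deriv, hμI t, hInv t, hνI t]
    funext i
    fin_cases i
    · simp only [lcross, Pi.add_apply, Pi.sub_apply, Pi.smul_apply, Pi.neg_apply,
        smul_eq_mul, Fin.isValue, Fin.zero_eta, Fin.mk_one, Fin.reduceFinMk,
        Matrix.cons_val_zero, Matrix.cons_val_one, Matrix.head_cons,
        Matrix.cons_val_two, Matrix.tail_cons]
      norm_num
      linear_combination ((1/2)*(ν t 0)*(ε)*(s t)^3*(m t) + (1/2)*(ν t 0)*(s t)^3*(n t) + (-1)*(ν t 0)*(ε)*(s t)*(m t)) * hA + ((-1/2)*(γ t 0)*(ε)*(s t)^3*(n t) + (-1/2)*(γ t 0)*(s t)^3*(m t) + (γ t 0)*(s t)*(m t)) * hB + ((-1/2)*(γ t 0)*(ε)*(s t)^3*(m t) + (-1/2)*(γ t 0)*(s t)^3*(n t) + (γ t 0)*(ε)*(s t)*(m t) + (1/2)*(ν t 0)*(ε)*(s t)^3*(n t) + (1/2)*(ν t 0)*(s t)^3*(m t) + (-1)*(ν t 0)*(s t)*(m t)) * hC + ((-1/2)*(γ t 0)*(ν t 1)^2*(s t)^3*(m t) + (-1/2)*(γ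 t 0)*(ν t 2)^2*(s t)^3*(m t) + (1/2)*(γ t 1)*(ν t 0)*(ν t 1)*(s t)^3*(m t) + (1/2)*(γ t 2)*(ν t 0)*(ν t 2)*(s t)^3*(m t) + (1/2)*(ν t 0)*(s t)^3*(n t) + (-1)*(γ t 2)*(ν t 1)*(s t)^2*(m t) + (γ t 1)*(ν t 2)*(s t)^2*(m t)) * hE
    · simp only [lcross, Pi.add_apply, Pi.sub_apply, Pi.smul_apply, Pi.neg_apply,
        smul_eq_mul, Fin.isValue, Fin.zero_eta, Fin.mk_one, Fin.reduceFinMk,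
        Matrix.cons_val_zero, Matrix.cons_val_one, Matrix.head_cons,
        Matrix.cons_val_two, Matrix.tail_cons]
      norm_num
      linear_combination ((1/2)*(ν t 1)*(ε)*(s t)^3*(m t) + (1/2)*(ν t 1)*(s t)^3*(n t) + (-1)*(ν t 1)*(ε)*(s t)*(m t)) * hA + ((-1/2)*(γ t 1)*(ε)^2*(s t)^3*(m t) + (-1/2)*(γ t 1)*(ε)*(s t)^3*(n t) + (γ t 1)*(s t)*(m t)) * hB + ((1/2)*(ν t 1)*(ε)^2*(s t)^3*(m t) + (1/2)*(ν t 1)*(ε)*(s t)^3*(n t) + (-1)*(ν t 1)*(s t)*(m t) + (-1/2)*(γ t 1)*(ε)*(s t)^3*(m t) + (-1/2)*(γ t 1)*(s t)^3*(n t) + (γ t 1)*(ε)*(s t)*(m t)) * hC + ((γ t 0)*(ν t 2)*(s t)^2*(m t) + (-1)*(γ t 2)*(ν t 0)*(s t)^2*(m t) + (1/2)*(ν t 1)*(s t)^3*(n t) + (-1/2)*(γ t 1)*(s t)^3*(m t)) * hE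
    · simp only [lcross, Pi.add_apply, Pi.sub_apply, Pi.smul_apply, Pi.neg_apply,
        smul_eq_mul, Fin.isValue, Fin.zero_eta, Fin.mk_one, Fin.reduceFinMk,
        Matrix.cons_val_zero, Matrix.cons_val_one, Matrix.head_cons,
        Matrix.cons_val_two, Matrix.tail_cons]
      norm_num
      linear_combination ((1/2)*(ν t 2)*(ε)*(s t)^3*(m t) + (1/2)*(ν t 2)*(s t)^3*(n t) + (-1)*(ν t 2)*(ε)*(s t)*(m t)) * hA + ((-1/2)*(γ t 2)*(ε)^2*(s t)^3*(m t) + (-1/2)*(γ t 2)*(ε)*(s t)^3*(n t) + (γ t 2)*(s t)*(m t)) * hB + ((-1/2)*(γ t 2)*(ε)*(s t)^3*(m t) + (-1/2)*(γ t 2)*(s t)^3*(n t) + (γ t 2)*(ε)*(s t)*(m t) + (1/2)*(ν t 2)*(ε)^2*(s t)^3*(m t) + (1/2)*(ν t 2)*(ε)*(s t)^3*(n t) + (-1)*(ν t 2)*(s t)*(m t)) * hC + ((-1)*(γ t 0)*(ν t 1)*(s t)^2*(m t) + (γ t 1)*(ν t 0)*(s t)^2*(m t) + (-1/2)*(γ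 t 2)*(s t)^3*(m t) + (1/2)*(ν t 2)*(s t)^3*(n t)) * hE
  · rw [hνId.deriv, hμI t, hInv t, hνI t]
    funext i
    fin_cases i
    · simp only [lcross, Pi.add_apply, Pi.sub_apply, Pi.smul_apply, Pi.neg_apply,
        smul_eq_mul, Fin.isValue, Fin.zero_eta, Fin.mk_one, Fin.reduceFinMk,
        Matrix.cons_val_zero, Matrix.cons_val_one, Matrix.head_cons,
        Matrix.cons_val_two, Matrix.tail_cons]
      norm_num
      linear_combination ((-1/2)*(ν t 0)*(ε)*(s t)^2*(m t) + (-1/2)*(ν t 0)*(s t)^2*(n t) + (ν t 0)*(ε)*(m t)) * hA + ((1/2)*(γ t 0)*(ε)*(s t)^2*(n t) + (1/2)*(γ t 0)*(s t)^2*(m t) + (-1)*(γ t 0)*(m t)) * hB + ((1/2)*(γ t 0)*(ε)*(s t)^2*(m t) + (1/2)*(γ t 0)*(s t)^2*(n t) + (-1)*(γ t 0)*(ε)*(m t) + (-1/2)*(ν t 0)*(ε)*(s t)^2*(n t) + (-1/2)*(ν t 0)*(s t)^2*(m t) + (ν t 0)*(m t)) * hC + ((1/2)*(γ t 0)*(ν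 t 1)^2*(s t)^2*(m t) + (1/2)*(γ t 0)*(ν t 2)^2*(s t)^2*(m t) + (-1/2)*(γ t 1)*(ν t 0)*(ν t 1)*(s t)^2*(m t) + (-1/2)*(γ t 2)*(ν t 0)*(ν t 2)*(s t)^2*(m t) + (-1/2)*(ν t 0)*(s t)^2*(n t) + (γ t 2)*(ν t 1)*(s t)*(m t) + (-1)*(γ t 1)*(ν t 2)*(s t)*(m t)) * hE
    · simp only [lcross, Pi.add_apply, Pi.sub_apply, Pi.smul_apply, Pi.neg_apply,
        smul_eq_mul, Fin.isValue, Fin.zero_eta, Fin.mk_one, Fin.reduceFinMk,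
        Matrix.cons_val_zero, Matrix.cons_val_one, Matrix.head_cons,
        Matrix.cons_val_two, Matrix.tail_cons]
      norm_num
      linear_combination ((-1/2)*(ν t 1)*(ε)*(s t)^2*(m t) + (-1/2)*(ν t 1)*(s t)^2*(n t) + (ν t 1)*(ε)*(m t)) * hA + ((1/2)*(γ t 1)*(ε)^2*(s t)^2*(m t) + (1/2)*(γ t 1)*(ε)*(s t)^2*(n t) + (-1)*(γ t 1)*(m t)) * hB + ((-1/2)*(ν t 1)*(ε)^2*(s t)^2*(m t) + (-1/2)*(ν t 1)*(ε)*(s t)^2*(n t) + (ν t 1)*(m t) + (1/2)*(γ t 1)*(ε)*(s t)^2*(m t) + (1/2)*(γ t 1)*(s t)^2*(n t) + (-1)*(γ t 1)*(ε)*(m t)) * hC + ((-1)*(γ t 0)*(ν t 2)*(s t)*(m t) + (γ t 2)*(ν t 0)*(s t)*(m t) + (-1/2)*(ν t 1)*(s t)^2*(n t) + (1/2)*(γ t 1)*(s t)^2*(m t)) * hE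
    · simp only [lcross, Pi.add_apply, Pi.sub_apply, Pi.smul_apply, Pi.neg_apply,
        smul_eq_mul, Fin.isValue, Fin.zero_eta, Fin.mk_one, Fin.reduceFinMk,
        Matrix.cons_val_zero, Matrix.cons_val_one, Matrix.head_cons,
        Matrix.cons_val_two, Matrix.tail_cons]
      norm_num
      linear_combination ((-1/2)*(ν t 2)*(ε)*(s t)^2*(m t) + (-1/2)*(ν t 2)*(s t)^2*(n t) + (ν t 2)*(ε)*(m t)) * hA + ((1/2)*(γ t 2)*(ε)^2*(s t)^2*(m t) + (1/2)*(γ t 2)*(ε)*(s t)^2*(n t) + (-1)*(γ t 2)*(m t)) * hB + ((1/2)*(γ t 2)*(ε)*(s t)^2*(m t) + (1/2)*(γ t 2)*(s t)^2*(n t) + (-1)*(γ t 2)*(ε)*(m t) + (-1/2)*(ν t 2)*(ε)^2*(s t)^2*(m t) + (-1/2)*(ν t 2)*(ε)*(s t)^2*(n t) + (ν t 2)*(m t)) * hC + ((γ t 0)*(ν t 1)*(s t)*(m t) + (-1)*(γ t 1)*(ν t 0)*(s t)*(m t) + (1/2)*(γ t 2)*(s t)^2*(m t) + (-1/2)*(ν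 t 2)*(s t)^2*(n t)) * hE
end
end

section
/- Let (γ,ν) : I → Δ₁ be a spacelike Legendre curve with curvature (m,n) and μ = γ∧ν, and let s_±, ŝ_± : I → ℝ be two smooth solutions of the Riccati equation ṡ(t) = ((m(t) ± n(t))/2)s(t)² − m(t). Let Inv^±(γ,s_±) = γ + s_±μ + (s_±²/2)(γ ± ν) and Inv^±(γ,ŝ_±) = γ + ŝ_±μ + (ŝ_±²/2)(γ ± ν) be the corresponding horocyclic involutes, with ν_I^± = −s_±γ − μ ∓ s_±ν, μ_I^± = Inv^±(γ,s_±) ∧ ν_I^±, and curvature (m_I^±, n_I^±) = (−s_±(n ± m), n ± m). Then δ := s_± − ŝ_± satisfies the Bernoulli equation δ̇(t) = ∓(n_I^±(t)δ(t)²/2 + m_I^±(t)δ(t)), and Inv^±(γ,ŝ_±)(t) = Inv^±(γ,s_±)(t) + δ(t)ν_I^±(t) + (δ(t)²/2)(Inv^±(γ,s_±)(t) ± μ_I^±(t)) for all t ∈ I; that is, Inv^±(γ,ŝ_±) is a horocyclic parallel of Inv^±(γ,s_±). -/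
noncomputable section

/-- For two solutions `s_±, ŝ_±` of the Riccati equation, the horocyclic involutes
`Inv^±(γ,s_±)` and `Inv^±(γ,ŝ_±)` are horocyclic parallels of each other:
`δ = s_± − ŝ_±` solves the Bernoulli equation `δ̇ = ∓(n_I^±δ²/2 + m_I^±δ)` and
`Inv^±(γ,ŝ_±) = Inv^±(γ,s_±) + δν_I^± + (δ²/2)(Inv^±(γ,s_±) ± μ_I^±)`.
The sign `±` is encoded by `ε ∈ {1, -1}`. -/
theorem stmt_17 (I : Set ℝ) (hI : I.OrdConnected)
    (γ ν : ℝ → Fin 3 → ℝ) (m n : ℝ → ℝ)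
    (hγ : ContDiff ℝ (⊤ : ℕ∞) γ) (hν : ContDiff ℝ (⊤ : ℕ∞) ν)
    (hm : ContDiff ℝ (⊤ : ℕ∞) m) (hn : ContDiff ℝ (⊤ : ℕ∞) n)
    (hH : ∀ t ∈ I, mink (γ t) (γ t) = -1 ∧ 0 < γ t 0)
    (hS : ∀ t ∈ I, mink (ν t) (ν t) = 1)
    (hO : ∀ t ∈ I, mink (γ t) (ν t) = 0)
    (hdγ : ∀ t ∈ I, deriv γ t = m t • lcross (γ t) (ν t))
    (hdν : ∀ t ∈ I, deriv ν t = n t • lcross (γ t) (ν t))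
    (ε : ℝ) (hε : ε = 1 ∨ ε = -1)
    (s shat : ℝ → ℝ) (hs : ContDiff ℝ (⊤ : ℕ∞) s) (hshat : ContDiff ℝ (⊤ : ℕ∞) shat)
    (hsODE : ∀ t ∈ I, deriv s t = (m t + ε * n t) / 2 * s t ^ 2 - m t)
    (hshatODE : ∀ t ∈ I, deriv shat t = (m t + ε * n t) / 2 * shat t ^ 2 - m t)
    (Inv Invhat νI : ℝ → Fin 3 → ℝ)
    (hInv : ∀ t, Inv t
      = γ t + s t • lcross (γ t) (ν t) + (s t ^ 2 / 2) • (γ t + ε • ν t))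
    (hInvhat : ∀ t, Invhat t
      = γ t + shat t • lcross (γ t) (ν t) + (shat t ^ 2 / 2) • (γ t + ε • ν t))
    (hνI : ∀ t, νI t
      = (-(s t)) • γ t - lcross (γ t) (ν t) + (-ε * s t) • ν t)
    (μI : ℝ → Fin 3 → ℝ) (hμI : ∀ t, μI t = lcross (Inv t) (νI t)) :
    ∀ t ∈ I,
      deriv (fun τ => s τ - shat τ) t
        = -ε * ((n t + ε * m t) * (s t - shat t) ^ 2 / 2
            + (-(s t) * (n t + ε * m t)) * (s t - shat t)) ∧
      Invhat t
        = Inv t + (s t - shat t) • νI t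
          + ((s t - shat t) ^ 2 / 2) • (Inv t + ε • μI t) := by
  intro t ht
  have hE : ε ^ 2 = 1 := by rcases hε with h | h <;> simp [h]
  have hGG : mink (γ t) (γ t) = -1 := (hH t ht).1
  have hNN : mink (ν t) (ν t) = 1 := hS t ht
  have hGN : mink (γ t) (ν t) = 0 := hO t ht
  simp only [mink] at hGG hNN hGN
  constructor
  · have hd : deriv (fun τ => s τ - shat τ) t = deriv s t - deriv shat t :=
      deriv_fun_sub (hs.differentiable (by simp) t) (hshat.differentiable (by simp) t)
    rw [hd, hsODE t ht, hshatODE t ht]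
    linear_combination (m t * (s t - shat t) ^ 2 / 2 - m t * s t * (s t - shat t)) * hE
  · have hμ : μI t = lcross (Inv t) (νI t) := hμI t
    rw [hInvhat, hμ, hInv, hνI]
    have h0 : ∀ (h : 0 < 3), (⟨0, h⟩ : Fin 3) = 0 := fun _ => rfl
    have h1 : ∀ (h : 1 < 3), (⟨1, h⟩ : Fin 3) = 1 := fun _ => rfl
    have h2 : ∀ (h : 2 < 3), (⟨2, h⟩ : Fin 3) = 2 := fun _ => rfl
    funext i
    fin_cases i
    · simp only [h0, h1, h2, lcross, mink, Pi.add_apply, Pi.sub_apply, Pi.smul_apply, smul_eq_mul,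
        Matrix.cons_val_zero, Matrix.cons_val_one, Matrix.head_cons, Matrix.cons_val_two,
        Matrix.tail_cons, Fin.isValue]
      linear_combination
        ((s t - shat t) ^ 2 / 2 * (ε * (s t ^ 2 / 2 - 1) * γ t 0 - ε ^ 2 * (s t ^ 2 / 2) * ν t 0)) * hGN
        + ((s t - shat t) ^ 2 / 2 * (s t ^ 2 / 2) * ε ^ 2 * γ t 0) * hNN
        + ((s t - shat t) ^ 2 / 2 * ((s t ^ 2 / 2) * γ t 0 + s t * (-(γ t 1 * ν t 2 - γ t 2 * ν t 1)))) * hE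
        + (ε * (s t - shat t) ^ 2 / 2 * (1 - s t ^ 2 / 2) * ν t 0) * hGG
    · simp only [h0, h1, h2, lcross, mink, Pi.add_apply, Pi.sub_apply, Pi.smul_apply, smul_eq_mul,
        Matrix.cons_val_zero, Matrix.cons_val_one, Matrix.head_cons, Matrix.cons_val_two,
        Matrix.tail_cons, Fin.isValue]
      linear_combination
        ((s t - shat t) ^ 2 / 2 * (ε * (s t ^ 2 / 2 - 1) * γ t 1 - ε ^ 2 * (s t ^ 2 / 2) * ν t 1)) * hGN
        + ((s t - shat t) ^ 2 / 2 * (s t ^ 2 / 2) * ε ^ 2 * γ t 1) * hNN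
        + ((s t - shat t) ^ 2 / 2 * ((s t ^ 2 / 2) * γ t 1 + s t * (-(γ t 0 * ν t 2 - γ t 2 * ν t 0)))) * hE
        + (ε * (s t - shat t) ^ 2 / 2 * (1 - s t ^ 2 / 2) * ν t 1) * hGG
    · simp only [h0, h1, h2, lcross, mink, Pi.add_apply, Pi.sub_apply, Pi.smul_apply, smul_eq_mul,
        Matrix.cons_val_zero, Matrix.cons_val_one, Matrix.head_cons, Matrix.cons_val_two,
        Matrix.tail_cons, Fin.isValue]
      linear_combination
        ((s t - shat t) ^ 2 / 2 * (ε * (s t ^ 2 / 2 - 1) * γ t 2 - ε ^ 2 * (s t ^ 2 / 2) * ν t 2)) * hGN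
        + ((s t - shat t) ^ 2 / 2 * (s t ^ 2 / 2) * ε ^ 2 * γ t 2) * hNN
        + ((s t - shat t) ^ 2 / 2 * ((s t ^ 2 / 2) * γ t 2 + s t * (γ t 0 * ν t 1 - γ t 1 * ν t 0))) * hE
        + (ε * (s t - shat t) ^ 2 / 2 * (1 - s t ^ 2 / 2) * ν t 2) * hGG
end
end

section
/- Let (γ,ν) : I → Δ₁ be a spacelike Legendre curve with curvature (m,n), μ = γ∧ν, and let s_± : I → ℝ be a smooth solution of the Riccati equation ṡ_±(t) = ((m(t) ± n(t))/2)s_±(t)² − m(t), with horocyclic involute Inv^±(γ,s_±) = γ + s_±μ + (s_±²/2)(γ ± ν), ν_I^± = −s_±γ − μ ∓ s_±ν, and curvature (m_I^±, n_I^±) = (−s_±(n ± m), n ± m). Assume {t ∈ I : n(t) ± m(t) ≠ 0} is dense in I. Then f_I^± := s_± satisfies m_I^±(t) + f_I^±(t)n_I^±(t) = 0 for all t ∈ I, so the horocyclic evolute of the involute is defined, and: (1) the horocyclic evolute with sign + of (Inv^+(γ,s_+), ν_I^+) equals γ, and the horocyclic evolute with sign − of (Inv^−(γ,s_−), ν_I^−)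 equals γ; (2) the horocyclic evolute with sign + of (Inv^−(γ,s_−), −ν_I^−) equals γ, and the horocyclic evolute with sign − of (Inv^+(γ,s_+), −ν_I^+) equals γ. -/
noncomputable section

/-- The horocyclic evolute of a horocyclic involute of `γ` is `γ` itself:
`f_I^± = s_±` satisfies `m_I^± + f_I^± n_I^± = 0`, the evolute with sign `±` of
`(Inv^±(γ,s_±), ν_I^±)` equals `γ`, and the evolute with sign `∓` of
`(Inv^±(γ,s_±), −ν_I^±)` (built with `−s_±`) equals `γ`.
The sign `±` is encoded by `ε ∈ {1, -1}`. -/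
theorem stmt_18 (I : Set ℝ) (hI : I.OrdConnected)
    (γ ν : ℝ → Fin 3 → ℝ) (m n : ℝ → ℝ)
    (hγ : ContDiff ℝ (⊤ : ℕ∞) γ) (hν : ContDiff ℝ (⊤ : ℕ∞) ν)
    (hm : ContDiff ℝ (⊤ : ℕ∞) m) (hn : ContDiff ℝ (⊤ : ℕ∞) n)
    (hH : ∀ t ∈ I, mink (γ t) (γ t) = -1 ∧ 0 < γ t 0)
    (hS : ∀ t ∈ I, mink (ν t) (ν t) = 1)
    (hO : ∀ t ∈ I, mink (γ t) (ν t) = 0)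
    (hdγ : ∀ t ∈ I, deriv γ t = m t • lcross (γ t) (ν t))
    (hdν : ∀ t ∈ I, deriv ν t = n t • lcross (γ t) (ν t))
    (ε : ℝ) (hε : ε = 1 ∨ ε = -1)
    (hdense : I ⊆ closure {t ∈ I | n t + ε * m t ≠ 0})
    (s : ℝ → ℝ) (hs : ContDiff ℝ (⊤ : ℕ∞) s)
    (hsODE : ∀ t ∈ I, deriv s t = (m t + ε * n t) / 2 * s t ^ 2 - m t)
    (Inv νI : ℝ → Fin 3 → ℝ)
    (hInv : ∀ t, Inv t
      = γ t + s t • lcross (γ t) (ν t) + (s t ^ 2 / 2) • (γ t + ε • ν t))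
    (hνI : ∀ t, νI t
      = (-(s t)) • γ t - lcross (γ t) (ν t) + (-ε * s t) • ν t) :
    ∀ t ∈ I,
      (-(s t) * (n t + ε * m t)) + s t * (n t + ε * m t) = 0 ∧
      Inv t + s t • νI t
        + (s t ^ 2 / 2) • (Inv t + ε • lcross (Inv t) (νI t)) = γ t ∧
      Inv t + (-(s t)) • (-(νI t))
        + ((-(s t)) ^ 2 / 2) • (Inv t + (-ε) • lcross (Inv t) (-(νI t))) = γ t := by
  intro t ht
  obtain ⟨hA, -⟩ := hH t ht
  have hB := hS t ht
  have hC := hO t ht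
  have hE : ε ^ 2 = 1 := by rcases hε with h | h <;> simp [h]
  simp only [mink] at hA hB hC
  refine ⟨by ring, ?_, ?_⟩ <;>
  · funext i
    simp only [hInv, hνI, lcross, Pi.add_apply, Pi.sub_apply, Pi.smul_apply, Pi.neg_apply,
      smul_eq_mul]
    fin_cases i <;>
      simp only [Fin.zero_eta, Fin.mk_one, Fin.reduceFinMk, Fin.isValue, Matrix.cons_val_zero,
        Matrix.cons_val_one, Matrix.head_cons, Matrix.cons_val_two, Matrix.tail_cons,
        Pi.add_apply, Pi.sub_apply, Pi.smul_apply, Pi.neg_apply, smul_eq_mul]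
    · linear_combination ((-1/2:ℝ) * ν t 0 * s t^2 * ε + (1/4:ℝ) * ν t 0 * s t^4 * ε) * hA + ((-1/4:ℝ) * γ t 0 * s t^4) * hB + ((1/4:ℝ) * ν t 0 * s t^4 + (1/2:ℝ) * γ t 0 * s t^2 * ε + (-1/4:ℝ) * γ t 0 * s t^4 * ε) * hC + ((-1/2:ℝ) * γ t 2 * ν t 1 * s t^3 + (1/4:ℝ) * γ t 2 * ν t 0 * ν t 2 * s t^4 + (1/2:ℝ) * γ t 1 * ν t 2 * s t^3 + (1/4:ℝ) * γ t 1 * ν t 0 * ν t 1 * s t^4 + (-1/4:ℝ) * γ t 0 * ν t 2^2 * s t^4 + (-1/4:ℝ) * γ t 0 * ν t 1^2 * s t^4) * hE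
    · linear_combination ((-1/2:ℝ) * ν t 1 * s t^2 * ε + (1/4:ℝ) * ν t 1 * s t^4 * ε) * hA + ((-1/4:ℝ) * γ t 1 * s t^4 * ε^2) * hB + ((1/4:ℝ) * ν t 1 * s t^4 * ε^2 + (1/2:ℝ) * γ t 1 * s t^2 * ε + (-1/4:ℝ) * γ t 1 * s t^4 * ε) * hC + ((-1/2:ℝ) * γ t 2 * ν t 0 * s t^3 + (-1/4:ℝ) * γ t 1 * s t^4 + (1/2:ℝ) * γ t 0 * ν t 2 * s t^3) * hE
    · linear_combination ((-1/2:ℝ) * ν t 2 * s t^2 * ε + (1/4:ℝ) * ν t 2 * s t^4 * ε) * hA + ((-1/4:ℝ) * γ t 2 * s t^4 * ε^2) * hB + ((1/4:ℝ) * ν t 2 * s t^4 * ε^2 + (1/2:ℝ) * γ t 2 * s t^2 * ε + (-1/4:ℝ) * γ t 2 * s t^4 * ε) * hC + ((-1/4:ℝ) * γ t 2 * s t^4 + (1/2:ℝ) * γ t 1 * ν t 0 * s t^3 + (-1/2:ℝ) * γ t 0 * ν t 1 * s t^3) * hE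
end
end

section
/- Let (γ,ν) : I → Δ₁ be a spacelike Legendre curve with curvature (m,n), μ = γ∧ν, and suppose there exists a smooth function f : I → ℝ with m(t) + f(t)n(t) = 0 for all t ∈ I. Let Ev^±(γ) = γ + fν + (f²/2)(γ ± μ) be the horocyclic evolute, with ν_E^± = ∓(f²/2)γ ∓ fν + (1 − f²/2)μ, μ_E^± = Ev^±(γ) ∧ ν_E^±, and curvature (m_E^±, n_E^±) = (−ḟ ± f²n/2, ±ḟ − f²n/2 + n). Then: (i) a smooth S : I → ℝ solves the Riccati equation Ṡ(t) = ((m_E^±(t) ± n_E^±(t))/2)S(t)² − m_E^±(t) if and only if Ṡ(t) = ±(n(t)/2)S(t)² + ḟ(t) ∓ f(t)²n(t)/2; in particular S = f is a solution; (ii) for every solution S_E^±, the horocyclic involute with sign ± of (Ev^±(γ), ν_E^±), namely Ev^±(γ) + S_E^±μ_E^± + ((S_E^±)²/2)(Ev^±(γ) ± ν_E^±), equals γ + (f − S_E^±)ν + ((f − S_E^±)²/2)(γ ± μ); (iii) d := f − S_E^± satisfies the Bernoulli equation ḋ(t) = ∓(d(t)²n(t)/2 + d(t)m(t)), so this involute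 of the evolute is a horocyclic parallel P^±(γ, f − S_E^±) of γ. -/
noncomputable section

lemma aux_GM (G V : Fin 3 → ℝ) (h1 : mink G G = -1) (h3 : mink G V = 0) :
    lcross G (lcross G V) = -V := by
  unfold mink at h1 h3
  funext i
  fin_cases i
  · simp [lcross]; linear_combination V 0 * h1 - G 0 * h3
  · simp [lcross]; linear_combination V 1 * h1 - G 1 * h3
  · simp [lcross]; linear_combination V 2 * h1 - G 2 * h3

lemma aux_VM (G V : Fin 3 → ℝ) (h2 : mink V V = 1) (h3 : mink G V = 0) :
    lcross V (lcross G V) = -G := by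
  unfold mink at h2 h3
  funext i
  fin_cases i
  · simp [lcross]; linear_combination -(G 0) * h2 + V 0 * h3
  · simp [lcross]; linear_combination -(G 1) * h2 + V 1 * h3
  · simp [lcross]; linear_combination -(G 2) * h2 + V 2 * h3

lemma aux_inv (G V : Fin 3 → ℝ) (h1 : mink G G = -1) (h2 : mink V V = 1) (h3 : mink G V = 0)
    (ε : ℝ) (hε : ε = 1 ∨ ε = -1) (f S : ℝ)
    (Ev νE μE : Fin 3 → ℝ)
    (hEv : Ev = G + f • V + (f ^ 2 / 2) • (G + ε • lcross G V))
    (hνE : νE = (-ε * (f ^ 2 / 2)) • G + (-ε * f) • V + (1 - f ^ 2 / 2) • lcross G V)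
    (hμE : μE = lcross Ev νE) :
    Ev + S • μE + (S ^ 2 / 2) • (Ev + ε • νE)
      = G + (f - S) • V + ((f - S) ^ 2 / 2) • (G + ε • lcross G V) := by
  have hGM := aux_GM G V h1 h3
  have hVM := aux_VM G V h2 h3
  have e0 := congrFun hGM 0; have e1 := congrFun hGM 1; have e2 := congrFun hGM 2
  have d0 := congrFun hVM 0; have d1 := congrFun hVM 1; have d2 := congrFun hVM 2
  simp only [lcross] at e0 e1 e2 d0 d1 d2
  subst hEv hνE hμE
  rcases hε with rfl | rfl <;>
    (funext i; fin_cases i <;>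
      simp [lcross, mink, Matrix.vecHead, Matrix.vecTail] at e0 e1 e2 d0 d1 d2 ⊢)
  · linear_combination S * e0 + (f * S) * d0
  · linear_combination S * e1 + (f * S) * d1
  · linear_combination S * e2 + (f * S) * d2
  · linear_combination S * e0 + (f * S) * d0
  · linear_combination S * e1 + (f * S) * d1
  · linear_combination S * e2 + (f * S) * d2

/-- Horocyclic involutes of the horocyclic evolute `Ev^±(γ)`: (i) the Riccati equation for
the evolute reduces to `Ṡ = ±(n/2)S² + ḟ ∓ f²n/2`, of which `S = f` is a solution;
(ii) the involute with sign `±` of `(Ev^±(γ), ν_E^±)` built from a solution `S_E^±` equals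
`γ + (f−S_E^±)ν + ((f−S_E^±)²/2)(γ ± μ)`; (iii) `d = f − S_E^±` solves the Bernoulli
equation `ḋ = ∓(d²n/2 + dm)`, so this curve is a horocyclic parallel `P^±(γ, f−S_E^±)`
of `γ`.  The sign `±` is encoded by `ε ∈ {1, -1}`. -/
theorem stmt_19 (I : Set ℝ) (hI : I.OrdConnected)
    (γ ν : ℝ → Fin 3 → ℝ) (m n : ℝ → ℝ)
    (hγ : ContDiff ℝ (⊤ : ℕ∞) γ) (hν : ContDiff ℝ (⊤ : ℕ∞) ν)
    (hm : ContDiff ℝ (⊤ : ℕ∞) m) (hn : ContDiff ℝ (⊤ : ℕ∞) n)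
    (hH : ∀ t ∈ I, mink (γ t) (γ t) = -1 ∧ 0 < γ t 0)
    (hS : ∀ t ∈ I, mink (ν t) (ν t) = 1)
    (hO : ∀ t ∈ I, mink (γ t) (ν t) = 0)
    (hdγ : ∀ t ∈ I, deriv γ t = m t • lcross (γ t) (ν t))
    (hdν : ∀ t ∈ I, deriv ν t = n t • lcross (γ t) (ν t))
    (ε : ℝ) (hε : ε = 1 ∨ ε = -1)
    (f : ℝ → ℝ) (hf : ContDiff ℝ (⊤ : ℕ∞) f)
    (hfmn : ∀ t ∈ I, m t + f t * n t = 0)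
    (Ev νE : ℝ → Fin 3 → ℝ)
    (hEv : ∀ t, Ev t
      = γ t + f t • ν t + (f t ^ 2 / 2) • (γ t + ε • lcross (γ t) (ν t)))
    (hνE : ∀ t, νE t
      = (-ε * (f t ^ 2 / 2)) • γ t + (-ε * f t) • ν t
        + (1 - f t ^ 2 / 2) • lcross (γ t) (ν t))
    (μE : ℝ → Fin 3 → ℝ) (hμE : ∀ t, μE t = lcross (Ev t) (νE t))
    (mE nE : ℝ → ℝ)
    (hmE : ∀ t, mE t = -(deriv f t) + ε * (f t ^ 2 * n t / 2))
    (hnE : ∀ t, nE t = ε * deriv f t - f t ^ 2 * n t / 2 + n t) :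
    (∀ S : ℝ → ℝ, ∀ t ∈ I,
      (deriv S t = (mE t + ε * nE t) / 2 * S t ^ 2 - mE t ↔
        deriv S t = ε * (n t / 2) * S t ^ 2 + deriv f t - ε * (f t ^ 2 * n t / 2))) ∧
    (∀ t ∈ I, deriv f t = (mE t + ε * nE t) / 2 * f t ^ 2 - mE t) ∧
    (∀ SE : ℝ → ℝ, ContDiff ℝ (⊤ : ℕ∞) SE →
      (∀ t ∈ I, deriv SE t = (mE t + ε * nE t) / 2 * SE t ^ 2 - mE t) →
      (∀ t ∈ I,
        Ev t + SE t • μE t + (SE t ^ 2 / 2) • (Ev t + ε • νE t)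
          = γ t + (f t - SE t) • ν t
            + ((f t - SE t) ^ 2 / 2) • (γ t + ε • lcross (γ t) (ν t))) ∧
      (∀ t ∈ I,
        deriv (fun τ => f τ - SE τ) t
          = -ε * ((f t - SE t) ^ 2 * n t / 2 + (f t - SE t) * m t))) := by
  have hε2 : ε ^ 2 = 1 := by rcases hε with rfl | rfl <;> norm_num
  have key : ∀ S : ℝ, ∀ t : ℝ,
      (mE t + ε * nE t) / 2 * S ^ 2 - mE t
        = ε * (n t / 2) * S ^ 2 + deriv f t - ε * (f t ^ 2 * n t / 2) := by
    intro S t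
    rw [hmE, hnE]
    linear_combination (deriv f t * S ^ 2 / 2) * hε2
  refine ⟨fun S t _ => by rw [key (S t) t], fun t _ => by rw [key (f t) t]; ring, ?_⟩
  intro SE hSE hRic
  constructor
  · intro t ht
    exact aux_inv (γ t) (ν t) (hH t ht).1 (hS t ht) (hO t ht) ε hε (f t) (SE t)
      (Ev t) (νE t) (μE t) (hEv t) (hνE t) (hμE t)
  · intro t ht
    rw [deriv_fun_sub ((hf.differentiable (by simp)) t) ((hSE.differentiable (by simp)) t),
      hRic t ht, key (SE t) t]
    linear_combination ε * (f t - SE t) * hfmn t ht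
end
end
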